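/- arXiv:physics/0607060 — 6 statements merged into one kernel-verified Lean document; each statement's English description precedes it below -/
import Mathlib

section
/- If the parameters of the sabra shell model satisfy a + b + c = 0, then the nonlinear term formally conserves energy: for any complex sequence (u_n) with u_0 = u_{-1} = 0 and finitely many nonzero terms, the real part of the sum over n of B(u,u)_n · conj(u_n) equals zero, where B(u,u)_n = -i(a k_{n+1} u_{n+2} conj(u_{n+1}) + b k_n u_{n+1} conj(u_{n-1}) - c k_{n-1} u_{n-1} u_{n-2}) and k_n = k_0 λ^n. -/
open Complex

/-- Wavenumbers of the sabra shell model: `k n = k0 * λ^n`. -/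
noncomputable def kk (k0 lam : ℝ) (n : ℤ) : ℝ := k0 * lam ^ n

/-- Nonlinear term of the sabra shell model. -/
noncomputable def sB (a b c k0 lam : ℝ) (u : ℤ → ℂ) (n : ℤ) : ℂ :=
  -Complex.I * ((a : ℂ) * (kk k0 lam (n + 1) : ℝ) * u (n + 2) * (starRingEnd ℂ) (u (n + 1))
    + (b : ℂ) * (kk k0 lam n : ℝ) * u (n + 1) * (starRingEnd ℂ) (u (n - 1))
    - (c : ℂ) * (kk k0 lam (n - 1) : ℝ) * u (n - 1) * u (n - 2))

/-!
Writing `Δ m = k_m Im (u_{m+1} conj u_m conj u_{m-1})` for the energy transfer through the triad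
`(m - 1, m, m + 1)`, each term of the energy balance splits as
`Re (B(u,u)_n conj u_n) = a Δ (n + 1) + b Δ n + c Δ (n - 1)`.
For a finitely supported `u` the three sums of shifted copies of `Δ` over `ℤ` coincide, so the
total is `(a + b + c) ∑ Δ = 0`. Since `u` vanishes at `n ≤ 0`, the sum over shells `n ≥ 1`
is the sum over all of `ℤ`.
-/

noncomputable def sabraTriadFlux (k0 lam : ℝ) (u : ℤ → ℂ) (m : ℤ) : ℝ :=
  kk k0 lam m * (u (m + 1) * starRingEnd ℂ (u m) * starRingEnd ℂ (u (m - 1))).im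

theorem re_sB_mul_conj (a b c k0 lam : ℝ) (u : ℤ → ℂ) (n : ℤ) :
    (sB a b c k0 lam u n * starRingEnd ℂ (u n)).re =
      a * sabraTriadFlux k0 lam u (n + 1) + b * sabraTriadFlux k0 lam u n
        + c * sabraTriadFlux k0 lam u (n - 1) := by
  simp only [sB, sabraTriadFlux, add_sub_cancel_right, sub_add_cancel,
    show n + 1 + 1 = n + 2 by ring, show n - 1 - 1 = n - 2 by ring]
  simp only [mul_re, mul_im, add_re, add_im, sub_re, sub_im, neg_re, neg_im, I_re, I_im,
    ofReal_re, ofReal_im, conj_re, conj_im]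
  ring

theorem support_sabraTriadFlux_subset (k0 lam : ℝ) (u : ℤ → ℂ) :
    Function.support (sabraTriadFlux k0 lam u) ⊆ Function.support u := fun m hm hum => by
  simp [sabraTriadFlux, hum] at hm

theorem tsum_shift_combination {R : Type*} [Ring R] [TopologicalSpace R] [IsTopologicalRing R]
    [T2Space R] {f : ℤ → R} (hf : Summable f) (a b c : R) :
    ∑' n, (a * f (n + 1) + b * f n + c * f (n - 1)) = (a + b + c) * ∑' n, f n := by
  have hf_succ : Summable fun n => f (n + 1) := (Equiv.addRight 1).summable_iff.2 hf
  have hf_pred : Summable fun n => f (n - 1) := (Equiv.subRight 1).summable_iff.2 hf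
  have hshift_succ : ∑' n, f (n + 1) = ∑' n, f n := (Equiv.addRight 1).tsum_eq f
  have hshift_pred : ∑' n, f (n - 1) = ∑' n, f n := (Equiv.subRight 1).tsum_eq f
  rw [((hf_succ.mul_left a).add (hf.mul_left b)).tsum_add (hf_pred.mul_left c),
    (hf_succ.mul_left a).tsum_add (hf.mul_left b), hf_succ.tsum_mul_left,
    hf.tsum_mul_left, hf_pred.tsum_mul_left, hshift_succ, hshift_pred, add_mul, add_mul]

theorem tsum_nat_succ_eq_tsum_int {M : Type*} [AddCommMonoid M] [TopologicalSpace M]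
    {f : ℤ → M} (hf : ∀ n ≤ 0, f n = 0) : ∑' n : ℕ, f ((n : ℤ) + 1) = ∑' n : ℤ, f n := by
  have hinj : Function.Injective fun n : ℕ => (n : ℤ) + 1 := fun m n h => by simpa using h
  refine hinj.tsum_eq fun n hn => ⟨(n - 1).toNat, ?_⟩
  have : 0 < n := not_le.1 fun h => hn (hf n h)
  show ((n - 1).toNat : ℤ) + 1 = n
  omega

theorem sabra_energy_conservation_general
    (a b c k0 lam : ℝ)
    (habc : a + b + c = 0)
    (u : ℤ → ℂ) (hb : ∀ n : ℤ, n ≤ 0 → u n = 0)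
    (hfin : (Function.support u).Finite) :
    (∑' n : ℕ, sB a b c k0 lam u ((n : ℤ) + 1) * (starRingEnd ℂ) (u ((n : ℤ) + 1))).re = 0 := by
  have hterms : Summable fun n => sB a b c k0 lam u n * starRingEnd ℂ (u n) :=
    summable_of_hasFiniteSupport <| hfin.subset fun n hn hun => by simp [hun] at hn
  have hflux : Summable (sabraTriadFlux k0 lam u) :=
    summable_of_hasFiniteSupport <| hfin.subset (support_sabraTriadFlux_subset k0 lam u)
  rw [tsum_nat_succ_eq_tsum_int (f := fun n => sB a b c k0 lam u n * starRingEnd ℂ (u n))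
    (fun n hn => by simp [hb n hn]), re_tsum hterms]
  simp only [re_sB_mul_conj]
  rw [tsum_shift_combination hflux, habc, zero_mul]

/-- if `a + b + c = 0`, then for any finitely supported complex sequence
with `u n = 0` for `n ≤ 0`, the nonlinear term formally conserves energy:
`Re (∑_{n ≥ 1} B(u,u)_n * conj (u_n)) = 0`. -/
theorem sabra_energy_conservation
    (a b c k0 lam : ℝ) (hk0 : 0 < k0) (hlam : 1 < lam)
    (habc : a + b + c = 0)
    (u : ℤ → ℂ) (hb : ∀ n : ℤ, n ≤ 0 → u n = 0)
    (hfin : (Function.support u).Finite) :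
    (∑' n : ℕ, sB a b c k0 lam u ((n : ℤ) + 1) * (starRingEnd ℂ) (u ((n : ℤ) + 1))).re = 0 :=
  sabra_energy_conservation_general a b c k0 lam habc u hb hfin
end

section
/- If the parameters of the sabra shell model satisfy a + b + c = 0 and a/c > 0 or a/c is any nonzero ratio, then for any complex sequence (u_n) with finitely many nonzero terms and u_0 = u_{-1} = 0, the quantity W = Σ_n (a/c)^n |u_n|^2 is formally conserved: the real part of Σ_n (a/c)^n B(u,u)_n · conj(u_n) equals zero. -/
open Complex

/-- if `a + b + c = 0` and `c ≠ 0`, then for any finitely supported complex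
sequence with `u n = 0` for `n ≤ 0`, the quantity `W = ∑ (a/c)^n |u_n|²` is formally
conserved: `Re (∑_{n ≥ 1} (a/c)^n B(u,u)_n * conj (u_n)) = 0`. -/
theorem sabra_W_conservation
    (a b c k0 lam : ℝ) (hk0 : 0 < k0) (hlam : 1 < lam)
    (hc : c ≠ 0) (habc : a + b + c = 0)
    (u : ℤ → ℂ) (hb : ∀ n : ℤ, n ≤ 0 → u n = 0)
    (hfin : (Function.support u).Finite) :
    (∑' n : ℕ, ((a / c : ℝ) ^ (n + 1) : ℂ) *
      sB a b c k0 lam u ((n : ℤ) + 1) * (starRingEnd ℂ) (u ((n : ℤ) + 1))).re = 0 := by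
  classical
  set g : ℝ := a / c with hg
  have hag : a = c * g := by rw [hg]; field_simp
  have hbg : b = -(c * g) - c := by rw [hag] at habc; linarith
  obtain ⟨M, hM⟩ := hfin.bddAbove
  set N : ℕ := M.toNat + 1 with hN
  have hu : ∀ m : ℤ, (N : ℤ) ≤ m → u m = 0 := by
    intro m hm
    by_contra h
    have h1 : m ≤ M := hM h
    have h2 : M ≤ (M.toNat : ℤ) := Int.self_le_toNat M
    omega
  set A : ℤ → ℂ := fun m => ((kk k0 lam m : ℝ) : ℂ) * u (m+1) * (starRingEnd ℂ) (u m)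
      * (starRingEnd ℂ) (u (m-1)) with hA
  set P : ℤ → ℝ := fun m => (A m).im with hP
  set G : ℕ → ℝ := fun j => c * g^(j+1) * (P ((j:ℤ)+1) - P (j:ℤ)) with hG
  set f : ℕ → ℂ := fun n => ((g : ℝ) ^ (n + 1) : ℂ) *
      sB a b c k0 lam u ((n : ℤ) + 1) * (starRingEnd ℂ) (u ((n : ℤ) + 1)) with hf
  have key : ∀ n : ℕ, (f n).re = G (n+1) - G n := by
    intro n
    have e1 : sB a b c k0 lam u ((n:ℤ)+1) * (starRingEnd ℂ) (u ((n:ℤ)+1)) =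
        -I * ((a:ℂ) * A ((n:ℤ)+2) + (b:ℂ) * A ((n:ℤ)+1)
          - (c:ℂ) * (starRingEnd ℂ) (A (n:ℤ)))  := by
      simp only [sB, hA]
      have e2 : (n:ℤ) + 1 + 1 = (n:ℤ) + 2 := by ring
      have e3 : (n:ℤ) + 1 + 2 = (n:ℤ) + 3 := by ring
      have e4 : (n:ℤ) + 1 - 1 = (n:ℤ) := by ring
      have e5 : (n:ℤ) + 1 - 2 = (n:ℤ) - 1 := by ring
      have e6 : (n:ℤ) + 2 + 1 = (n:ℤ) + 3 := by ring
      have e7 : (n:ℤ) + 2 - 1 = (n:ℤ) + 1 := by ring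
      rw [e2, e3, e4, e5, e6, e7]
      simp only [map_mul, Complex.conj_conj, Complex.conj_ofReal]
      ring
    rw [hf]
    simp only [mul_assoc]
    rw [e1, ← Complex.ofReal_pow, Complex.re_ofReal_mul]
    simp only [hG, hP, Complex.mul_re, Complex.mul_im, Complex.ofReal_re, Complex.ofReal_im,
      Complex.add_re, Complex.add_im, Complex.sub_re, Complex.sub_im, Complex.neg_re,
      Complex.neg_im, Complex.I_re, Complex.I_im, Complex.conj_re, Complex.conj_im]
    push_cast
    have e8 : (n:ℤ) + 1 + 1 = (n:ℤ) + 2 := by ring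
    rw [e8, hag, hbg]
    ring
  have hsum : (∑' n : ℕ, f n) = ∑ n ∈ Finset.range N, f n := by
    apply tsum_eq_sum
    intro n hn
    have hn' : (N : ℤ) ≤ (n : ℤ) + 1 := by
      simp [Finset.mem_range, not_lt] at hn
      exact_mod_cast by omega
    simp [hf, hu _ hn']
  have hPz : ∀ m : ℤ, ((N:ℤ) ≤ m + 1 ∨ m - 1 ≤ 0) → P m = 0 := by
    intro m hm
    rcases hm with hm | hm
    · simp [hP, hA, hu _ hm]
    · simp [hP, hA, hb _ hm]
  calc (∑' n : ℕ, f n).re = (∑ n ∈ Finset.range N, f n).re := by rw [hsum]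
    _ = ∑ n ∈ Finset.range N, (f n).re := by simp [Complex.re_sum]
    _ = ∑ n ∈ Finset.range N, (G (n+1) - G n) := by
        exact Finset.sum_congr rfl fun n _ => key n
    _ = G N - G 0 := Finset.sum_range_sub G N
    _ = 0 := by
        have p0 : P 0 = 0 := hPz 0 (Or.inr (by norm_num))
        have p1 : P 1 = 0 := hPz 1 (Or.inr (by norm_num))
        have pN : P N = 0 := hPz N (Or.inl (by omega))
        have pN1 : P ((N:ℤ)+1) = 0 := hPz ((N:ℤ)+1) (Or.inl (by omega))
        simp [hG, p0, p1, pN, pN1]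
end

section
/- For all real d, s, θ, and all sequences u ∈ V_{d-θ+s}, v ∈ V_{d-θ-s}, w ∈ w^{1+2θ,∞}, the bilinear pairing satisfies |⟨A^d B(u,v), w⟩_{1+2θ}| ≤ C_{d,s,θ} ‖w‖_{w^{1+2θ,∞}} |A^{(d-θ+s)/2} u| |A^{(d-θ-s)/2} v|, where C_{d,s,θ} = |a|(λ^{1-3d+3θ+s} + λ^{-(1-3d+3θ+s)}) + |b|(λ^{2s} + λ^{-(1-3d+3θ-s)}). -/
/-!
Write `F = k^{d-θ+s}|u|` and `G = k^{d-θ-s}|v|`. Bounding `|w_m|` by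
`k_m^{-(1+2θ)} ‖w‖_{w^{1+2θ,∞}}` and using `k_{m+i} = λ^i k_m`, each of the four terms of
`k_m^{2d} B(u,v)_m conj(w_m)` is at most `λ^e ‖w‖_{w^{1+2θ,∞}} F_{m+i} G_{m+j}`, where `e` is one of
the four exponents in `C_{d,s,θ}`. By Cauchy–Schwarz every shifted sum `∑_m F_{m+i} G_{m+j}` is at
most `|F|_{ℓ²} |G|_{ℓ²} = |A^{(d-θ+s)/2} u| |A^{(d-θ-s)/2} v|`.
-/

open Complex

/-- The sabra bilinear operator `B(u,v)`. -/
noncomputable def sB2 (a b k0 lam : ℝ) (u v : ℤ → ℂ) (n : ℤ) : ℂ :=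
  -Complex.I * ((a : ℂ) * (kk k0 lam (n + 1) : ℝ) * v (n + 2) * (starRingEnd ℂ) (u (n + 1))
    + (b : ℂ) * (kk k0 lam n : ℝ) * v (n + 1) * (starRingEnd ℂ) (u (n - 1))
    + (a : ℂ) * (kk k0 lam (n - 1) : ℝ) * u (n - 1) * v (n - 2)
    + (b : ℂ) * (kk k0 lam (n - 1) : ℝ) * v (n - 1) * u (n - 2))

/-- `AH k0 lam r u = |A^{r/2} u| = (∑ k_n^{2r} |u_n|²)^{1/2}`, the `V_r` norm. -/
noncomputable def AH (k0 lam r : ℝ) (u : ℤ → ℂ) : ℝ :=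
  Real.sqrt (∑' n : ℕ, (kk k0 lam ((n : ℤ) + 1)) ^ (2 * r) * ‖u ((n : ℤ) + 1)‖ ^ 2)

/-- `Wsup k0 lam m w = ‖w‖_{w^{m,∞}} = sup_n k_n^m |w_n|`. -/
noncomputable def Wsup (k0 lam m : ℝ) (w : ℤ → ℂ) : ℝ :=
  ⨆ n : ℕ, (kk k0 lam ((n : ℤ) + 1)) ^ m * ‖w ((n : ℤ) + 1)‖

lemma exists_hasSum_mul_shift_le {ι : Type*} [AddGroup ι] {f g : ι → ℝ} {A B : ℝ}
    (hA : 0 ≤ A) (hB : 0 ≤ B) (hf : ∀ m, 0 ≤ f m) (hg : ∀ m, 0 ≤ g m)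
    (hfA : HasSum (fun m => f m ^ 2) (A ^ 2)) (hgB : HasSum (fun m => g m ^ 2) (B ^ 2))
    (i j : ι) : ∃ C, C ≤ A * B ∧ HasSum (fun m => f (m + i) * g (m + j)) C := by
  have hshift {h : ι → ℝ} {c : ℝ} (k : ι) (hh : HasSum (fun m => h m ^ 2) c) :
      HasSum (fun m => h (m + k) ^ 2) c := by
    simpa only [Function.comp_def, Equiv.coe_addRight] using (Equiv.addRight k).hasSum_iff.mpr hh
  obtain ⟨C, -, hC, hfg⟩ := Real.inner_le_Lp_mul_Lq_hasSum_of_nonneg Real.HolderConjugate.two_two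
    hA hB (fun m => hf (m + i)) (fun m => hg (m + j))
    (by simpa only [Real.rpow_two] using hshift i hfA)
    (by simpa only [Real.rpow_two] using hshift j hgB)
  exact ⟨C, hC, hfg⟩

namespace Sabra

variable {k0 lam : ℝ}

lemma kk_pos (hk0 : 0 < k0) (hlam : 0 < lam) (m : ℤ) : 0 < kk k0 lam m :=
  mul_pos hk0 (zpow_pos hlam m)

lemma kk_rpow_eq_exp (hk0 : 0 < k0) (hlam : 0 < lam) (m : ℤ) (x : ℝ) :
    kk k0 lam m ^ x = Real.exp (x * Real.log k0 + m * x * Real.log lam) := by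
  rw [Real.rpow_def_of_pos (kk_pos hk0 hlam m), kk,
    Real.log_mul hk0.ne' (zpow_pos hlam m).ne', Real.log_zpow]
  ring_nf

lemma kk_rpow_mul_kk (hk0 : 0 < k0) (hlam : 0 < lam) {m n i j : ℤ} {x y z e : ℝ}
    (hk0_exp : x + 1 = y + z) (hlam_exp : m * x + n = e + i * y + j * z) :
    kk k0 lam m ^ x * kk k0 lam n = lam ^ e * (kk k0 lam i ^ y * kk k0 lam j ^ z) := by
  rw [← Real.rpow_one (kk k0 lam n), Real.rpow_def_of_pos hlam]
  simp only [kk_rpow_eq_exp hk0 hlam, ← Real.exp_add]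
  congr 1
  linear_combination Real.log k0 * hk0_exp + Real.log lam * hlam_exp

lemma norm_sB2_le (hk0 : 0 < k0) (hlam : 0 < lam) (a b : ℝ) (u v : ℤ → ℂ) (m : ℤ) :
    ‖sB2 a b k0 lam u v m‖ ≤
      |a| * kk k0 lam (m + 1) * ‖u (m + 1)‖ * ‖v (m + 2)‖
        + |b| * kk k0 lam m * ‖u (m - 1)‖ * ‖v (m + 1)‖
        + |a| * kk k0 lam (m - 1) * ‖u (m - 1)‖ * ‖v (m - 2)‖
        + |b| * kk k0 lam (m - 1) * ‖u (m - 2)‖ * ‖v (m - 1)‖ := by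
  have habs (n : ℤ) : |kk k0 lam n| = kk k0 lam n := abs_of_pos (kk_pos hk0 hlam n)
  rw [sB2, norm_mul, norm_neg, Complex.norm_I, one_mul]
  refine norm_add₄_le.trans (le_of_eq ?_)
  simp only [norm_mul, Complex.norm_real, Real.norm_eq_abs, RCLike.norm_conj, habs]
  ring

/-- The modulus of the `m`-th component of `A^{r/2} u`. -/
noncomputable def weightedAbs (k0 lam r : ℝ) (u : ℤ → ℂ) (m : ℤ) : ℝ :=
  kk k0 lam m ^ r * ‖u m‖

lemma weightedAbs_nonneg (hk0 : 0 < k0) (hlam : 0 < lam) (r : ℝ) (u : ℤ → ℂ) (m : ℤ) :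
    0 ≤ weightedAbs k0 lam r u m :=
  mul_nonneg (Real.rpow_nonneg (kk_pos hk0 hlam m).le r) (norm_nonneg _)

lemma hasSum_weightedAbs_sq (hk0 : 0 < k0) (hlam : 0 < lam) {r : ℝ} {u : ℤ → ℂ}
    (hu0 : ∀ n : ℤ, n ≤ 0 → u n = 0)
    (hu : Summable fun n : ℕ => kk k0 lam ((n : ℤ) + 1) ^ (2 * r) * ‖u ((n : ℤ) + 1)‖ ^ 2) :
    HasSum (fun m => weightedAbs k0 lam r u m ^ 2) (AH k0 lam r u ^ 2) := by
  have hsq (m : ℤ) : weightedAbs k0 lam r u m ^ 2 = kk k0 lam m ^ (2 * r) * ‖u m‖ ^ 2 := by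
    rw [weightedAbs, mul_pow, ← Real.rpow_mul_natCast (kk_pos hk0 hlam m).le, Nat.cast_ofNat,
      mul_comm r]
  have hshift : Function.Injective fun n : ℕ => (n : ℤ) + 1 := (add_left_injective 1).comp Nat.cast_injective
  have hvanish : ∀ m ∉ Set.range fun n : ℕ => (n : ℤ) + 1, weightedAbs k0 lam r u m ^ 2 = 0 := by
    intro m hm
    have hm0 : m ≤ 0 := by
      by_contra! hpos
      exact hm ⟨(m - 1).toNat, show ((m - 1).toNat : ℤ) + 1 = m by omega⟩
    simp [weightedAbs, hu0 m hm0]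
  rw [AH, Real.sq_sqrt (tsum_nonneg fun n => by positivity [kk_pos hk0 hlam ((n : ℤ) + 1)]),
    ← hshift.hasSum_iff hvanish]
  simpa only [Function.comp_def, hsq] using hu.hasSum

/-- The four triad interactions of `B(u,v)_m` after the weights have been moved onto `F` and `G`. -/
noncomputable def majorant (a b lam d s θ : ℝ) (F G : ℤ → ℝ) (m : ℤ) : ℝ :=
  |a| * lam ^ (1 - 3 * d + 3 * θ + s) * (F (m + 1) * G (m + 2))
    + |b| * lam ^ (2 * s) * (F (m - 1) * G (m + 1))
    + |a| * lam ^ (-(1 - 3 * d + 3 * θ + s)) * (F (m - 1) * G (m - 2))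
    + |b| * lam ^ (-(1 - 3 * d + 3 * θ - s)) * (F (m - 2) * G (m - 1))

section

variable {a b d s θ : ℝ} {F G : ℤ → ℝ}

lemma majorant_nonneg (hlam : 0 ≤ lam) (hF : ∀ m, 0 ≤ F m) (hG : ∀ m, 0 ≤ G m) (m : ℤ) :
    0 ≤ majorant a b lam d s θ F G m := by
  have := hF (m + 1); have := hF (m - 1); have := hF (m - 2)
  have := hG (m + 2); have := hG (m + 1); have := hG (m - 2); have := hG (m - 1)
  unfold majorant
  positivity

lemma summable_majorant_and_tsum_le {A B : ℝ} (hlam : 0 ≤ lam) (hA : 0 ≤ A) (hB : 0 ≤ B)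
    (hF : ∀ m, 0 ≤ F m) (hG : ∀ m, 0 ≤ G m)
    (hFA : HasSum (fun m => F m ^ 2) (A ^ 2)) (hGB : HasSum (fun m => G m ^ 2) (B ^ 2)) :
    Summable (majorant a b lam d s θ F G) ∧
      ∑' m, majorant a b lam d s θ F G m ≤
        (|a| * (lam ^ (1 - 3 * d + 3 * θ + s) + lam ^ (-(1 - 3 * d + 3 * θ + s)))
          + |b| * (lam ^ (2 * s) + lam ^ (-(1 - 3 * d + 3 * θ - s)))) * (A * B) := by
  obtain ⟨C₁, hC₁, h₁⟩ := exists_hasSum_mul_shift_le hA hB hF hG hFA hGB 1 2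
  obtain ⟨C₂, hC₂, h₂⟩ := exists_hasSum_mul_shift_le hA hB hF hG hFA hGB (-1) 1
  obtain ⟨C₃, hC₃, h₃⟩ := exists_hasSum_mul_shift_le hA hB hF hG hFA hGB (-1) (-2)
  obtain ⟨C₄, hC₄, h₄⟩ := exists_hasSum_mul_shift_le hA hB hF hG hFA hGB (-2) (-1)
  have hsum := (((h₁.mul_left (|a| * lam ^ (1 - 3 * d + 3 * θ + s))).add
    (h₂.mul_left (|b| * lam ^ (2 * s)))).add
    (h₃.mul_left (|a| * lam ^ (-(1 - 3 * d + 3 * θ + s))))).add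
    (h₄.mul_left (|b| * lam ^ (-(1 - 3 * d + 3 * θ - s))))
  -- `m + -1` and `m - 1` are definitionally equal in `ℤ`, so `hsum` is a `HasSum` for `majorant`.
  refine ⟨hsum.summable, hsum.tsum_eq.trans_le ?_⟩
  have hc₁ : 0 ≤ |a| * lam ^ (1 - 3 * d + 3 * θ + s) := by positivity
  have hc₂ : 0 ≤ |b| * lam ^ (2 * s) := by positivity
  have hc₃ : 0 ≤ |a| * lam ^ (-(1 - 3 * d + 3 * θ + s)) := by positivity
  have hc₄ : 0 ≤ |b| * lam ^ (-(1 - 3 * d + 3 * θ - s)) := by positivity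
  nlinarith [mul_le_mul_of_nonneg_left hC₁ hc₁, mul_le_mul_of_nonneg_left hC₂ hc₂,
    mul_le_mul_of_nonneg_left hC₃ hc₃, mul_le_mul_of_nonneg_left hC₄ hc₄]

end

lemma norm_pairing_term_le (hk0 : 0 < k0) (hlam : 0 < lam) (a b d s θ : ℝ) (u v : ℤ → ℂ)
    {w : ℤ → ℂ} {W : ℝ} {m : ℤ} (hw : kk k0 lam m ^ (1 + 2 * θ) * ‖w m‖ ≤ W) :
    ‖(kk k0 lam m ^ (2 * d) : ℝ) * sB2 a b k0 lam u v m * starRingEnd ℂ (w m)‖ ≤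
      W * majorant a b lam d s θ (weightedAbs k0 lam (d - θ + s) u)
        (weightedAbs k0 lam (d - θ - s) v) m := by
  have hk := kk_pos hk0 hlam m
  have hB := norm_sB2_le hk0 hlam a b u v m
  have hw' : ‖w m‖ ≤ W * kk k0 lam m ^ (-(1 + 2 * θ)) := by
    rw [Real.rpow_neg hk.le, ← div_eq_mul_inv, le_div_iff₀ (by positivity), mul_comm]
    exact hw
  have hsplit : kk k0 lam m ^ (2 * d) * kk k0 lam m ^ (-(1 + 2 * θ)) =
      kk k0 lam m ^ (2 * d - 1 - 2 * θ) := by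
    rw [← Real.rpow_add hk]; ring_nf
  have I₁ := kk_rpow_mul_kk (m := m) (n := m + 1) (i := m + 1) (j := m + 2)
    (x := 2 * d - 1 - 2 * θ) (y := d - θ + s) (z := d - θ - s) (e := 1 - 3 * d + 3 * θ + s)
    hk0 hlam (by ring) (by push_cast; ring)
  have I₂ := kk_rpow_mul_kk (m := m) (n := m) (i := m - 1) (j := m + 1)
    (x := 2 * d - 1 - 2 * θ) (y := d - θ + s) (z := d - θ - s) (e := 2 * s)
    hk0 hlam (by ring) (by push_cast; ring)
  have I₃ := kk_rpow_mul_kk (m := m) (n := m - 1) (i := m - 1) (j := m - 2)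
    (x := 2 * d - 1 - 2 * θ) (y := d - θ + s) (z := d - θ - s) (e := -(1 - 3 * d + 3 * θ + s))
    hk0 hlam (by ring) (by push_cast; ring)
  have I₄ := kk_rpow_mul_kk (m := m) (n := m - 1) (i := m - 2) (j := m - 1)
    (x := 2 * d - 1 - 2 * θ) (y := d - θ + s) (z := d - θ - s) (e := -(1 - 3 * d + 3 * θ - s))
    hk0 hlam (by ring) (by push_cast; ring)
  calc ‖(kk k0 lam m ^ (2 * d) : ℝ) * sB2 a b k0 lam u v m * starRingEnd ℂ (w m)‖
      = kk k0 lam m ^ (2 * d) * ‖sB2 a b k0 lam u v m‖ * ‖w m‖ := by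
        rw [norm_mul, norm_mul, Complex.norm_real, Real.norm_of_nonneg (by positivity),
          RCLike.norm_conj]
    _ ≤ kk k0 lam m ^ (2 * d) *
          (|a| * kk k0 lam (m + 1) * ‖u (m + 1)‖ * ‖v (m + 2)‖
            + |b| * kk k0 lam m * ‖u (m - 1)‖ * ‖v (m + 1)‖
            + |a| * kk k0 lam (m - 1) * ‖u (m - 1)‖ * ‖v (m - 2)‖
            + |b| * kk k0 lam (m - 1) * ‖u (m - 2)‖ * ‖v (m - 1)‖) *
          (W * kk k0 lam m ^ (-(1 + 2 * θ))) := by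
        gcongr
        exact mul_nonneg (Real.rpow_nonneg hk.le _) ((norm_nonneg _).trans hB)
    _ = W * majorant a b lam d s θ (weightedAbs k0 lam (d - θ + s) u)
          (weightedAbs k0 lam (d - θ - s) v) m := by
        rw [mul_comm W, mul_mul_mul_comm, hsplit, majorant]
        simp only [weightedAbs]
        linear_combination W * (|a| * ‖u (m + 1)‖ * ‖v (m + 2)‖ * I₁
          + |b| * ‖u (m - 1)‖ * ‖v (m + 1)‖ * I₂ + |a| * ‖u (m - 1)‖ * ‖v (m - 2)‖ * I₃
          + |b| * ‖u (m - 2)‖ * ‖v (m - 1)‖ * I₄)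

end Sabra

open Sabra in
theorem sabra_bilinear_pairing_estimate_general
    (a b k0 lam : ℝ) (hk0 : 0 < k0) (hlam : 1 < lam)
    (d s θ : ℝ) (u v w : ℤ → ℂ)
    (hu0 : ∀ n : ℤ, n ≤ 0 → u n = 0) (hv0 : ∀ n : ℤ, n ≤ 0 → v n = 0)
    (hu : Summable fun n : ℕ =>
      (kk k0 lam ((n : ℤ) + 1)) ^ (2 * (d - θ + s)) * ‖u ((n : ℤ) + 1)‖ ^ 2)
    (hv : Summable fun n : ℕ =>
      (kk k0 lam ((n : ℤ) + 1)) ^ (2 * (d - θ - s)) * ‖v ((n : ℤ) + 1)‖ ^ 2)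
    (hw : BddAbove (Set.range fun n : ℕ =>
      (kk k0 lam ((n : ℤ) + 1)) ^ (1 + 2 * θ) * ‖w ((n : ℤ) + 1)‖)) :
    ‖∑' n : ℕ, ((kk k0 lam ((n : ℤ) + 1)) ^ (2 * d) : ℝ) *
        sB2 a b k0 lam u v ((n : ℤ) + 1) * (starRingEnd ℂ) (w ((n : ℤ) + 1))‖ ≤
      (|a| * (lam ^ (1 - 3 * d + 3 * θ + s) + lam ^ (-(1 - 3 * d + 3 * θ + s)))
        + |b| * (lam ^ (2 * s) + lam ^ (-(1 - 3 * d + 3 * θ - s)))) *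
      Wsup k0 lam (1 + 2 * θ) w * AH k0 lam (d - θ + s) u * AH k0 lam (d - θ - s) v := by
  have hlam0 : 0 < lam := one_pos.trans hlam
  set P := majorant a b lam d s θ (weightedAbs k0 lam (d - θ + s) u)
    (weightedAbs k0 lam (d - θ - s) v)
  obtain ⟨hP, hP_le⟩ := summable_majorant_and_tsum_le (a := a) (b := b) (d := d)
    (A := AH k0 lam (d - θ + s) u) (B := AH k0 lam (d - θ - s) v) hlam0.le
    (Real.sqrt_nonneg _) (Real.sqrt_nonneg _) (weightedAbs_nonneg hk0 hlam0 _ u)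
    (weightedAbs_nonneg hk0 hlam0 _ v) (hasSum_weightedAbs_sq hk0 hlam0 hu0 hu)
    (hasSum_weightedAbs_sq hk0 hlam0 hv0 hv)
  have hW : 0 ≤ Wsup k0 lam (1 + 2 * θ) w :=
    (mul_nonneg (Real.rpow_nonneg (kk_pos hk0 hlam0 _).le _) (norm_nonneg _)).trans
      (le_ciSup hw 0)
  have hshift : Function.Injective fun n : ℕ => (n : ℤ) + 1 := (add_left_injective 1).comp Nat.cast_injective
  have hPn : Summable fun n : ℕ => Wsup k0 lam (1 + 2 * θ) w * P ((n : ℤ) + 1) :=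
    (hP.comp_injective hshift).mul_left _
  have hterm (n : ℕ) := norm_pairing_term_le hk0 hlam0 a b d s θ u v (le_ciSup hw n)
  have hnorm := Summable.of_nonneg_of_le (fun _ => norm_nonneg _) hterm hPn
  calc _ ≤ _ := norm_tsum_le_tsum_norm hnorm
    _ ≤ _ := hnorm.tsum_le_tsum hterm hPn
    _ = Wsup k0 lam (1 + 2 * θ) w * ∑' n : ℕ, P ((n : ℤ) + 1) := tsum_mul_left
    _ ≤ Wsup k0 lam (1 + 2 * θ) w * ∑' m, P m := by
      gcongr
      exact tsum_comp_le_tsum_of_inj hP (majorant_nonneg hlam0.le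
        (weightedAbs_nonneg hk0 hlam0 _ u) (weightedAbs_nonneg hk0 hlam0 _ v)) hshift
    _ ≤ _ := mul_le_mul_of_nonneg_left hP_le hW
    _ = _ := by ring

/-- the bilinear estimate
`|⟨A^d B(u,v), w⟩_{1+2θ}| ≤ C_{d,s,θ} ‖w‖_{w^{1+2θ,∞}} |A^{(d-θ+s)/2} u| |A^{(d-θ-s)/2} v|`. -/
theorem sabra_bilinear_pairing_estimate
    (a b k0 lam : ℝ) (hk0 : 0 < k0) (hlam : 1 < lam)
    (d s θ : ℝ) (u v w : ℤ → ℂ)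
    (hu0 : ∀ n : ℤ, n ≤ 0 → u n = 0) (hv0 : ∀ n : ℤ, n ≤ 0 → v n = 0)
    (hw0 : ∀ n : ℤ, n ≤ 0 → w n = 0)
    (hu : Summable fun n : ℕ =>
      (kk k0 lam ((n : ℤ) + 1)) ^ (2 * (d - θ + s)) * ‖u ((n : ℤ) + 1)‖ ^ 2)
    (hv : Summable fun n : ℕ =>
      (kk k0 lam ((n : ℤ) + 1)) ^ (2 * (d - θ - s)) * ‖v ((n : ℤ) + 1)‖ ^ 2)
    (hw : BddAbove (Set.range fun n : ℕ =>
      (kk k0 lam ((n : ℤ) + 1)) ^ (1 + 2 * θ) * ‖w ((n : ℤ) + 1)‖)) :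
    ‖∑' n : ℕ, ((kk k0 lam ((n : ℤ) + 1)) ^ (2 * d) : ℝ) *
        sB2 a b k0 lam u v ((n : ℤ) + 1) * (starRingEnd ℂ) (w ((n : ℤ) + 1))‖ ≤
      (|a| * (lam ^ (1 - 3 * d + 3 * θ + s) + lam ^ (-(1 - 3 * d + 3 * θ + s)))
        + |b| * (lam ^ (2 * s) + lam ^ (-(1 - 3 * d + 3 * θ - s)))) *
      Wsup k0 lam (1 + 2 * θ) w * AH k0 lam (d - θ + s) u * AH k0 lam (d - θ - s) v :=
  sabra_bilinear_pairing_estimate_general a b k0 lam hk0 hlam d s θ u v w hu0 hv0 hu hv hw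
end

section
/- For every u ∈ V_d and v ∈ V_{1-2d} (for any real d), one has ⟨B(u,v), u⟩_d = -conj(⟨B(u,u), v⟩_{1-2d}), and Re⟨B(v,u), u⟩_d = 0, provided a + b + c = 0. -/
open Complex

lemma kk_pos {k0 lam : ℝ} (hk0 : 0 < k0) (hlam : 0 < lam) (n : ℤ) : 0 < kk k0 lam n :=
  mul_pos hk0 (zpow_pos hlam n)

lemma kk_rpow_exp {k0 lam : ℝ} (hk0 : 0 < k0) (hlam : 0 < lam) (n : ℤ) (e : ℝ) :
    kk k0 lam n ^ e = Real.exp ((Real.log k0 + (n : ℝ) * Real.log lam) * e) := by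
  rw [Real.rpow_def_of_pos (kk_pos hk0 hlam n)]
  congr 1
  rw [kk, Real.log_mul (ne_of_gt hk0) (ne_of_gt (zpow_pos hlam n)), Real.log_zpow]

lemma shift_tsum (f : ℤ → ℂ) (c : ℤ) : ∑' m : ℤ, f (m + c) = ∑' m : ℤ, f m :=
  (Equiv.addRight c).tsum_eq f

lemma nat_int_inj : Function.Injective (fun n : ℕ => (n : ℤ) + 1) := by
  intro p q h; simpa using h

lemma nat_int_range (f : ℤ → ℂ) (h0 : ∀ m : ℤ, m ≤ 0 → f m = 0) :
    Function.support f ⊆ Set.range (fun n : ℕ => (n : ℤ) + 1) := by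
  intro x hx
  by_contra hc
  rcases le_or_gt x 0 with h | h
  · exact hx (h0 x h)
  · exact hc ⟨(x - 1).toNat, by simp; omega⟩

lemma tsum_nat_int (f : ℤ → ℂ) (h0 : ∀ m : ℤ, m ≤ 0 → f m = 0) :
    ∑' n : ℕ, f ((n : ℤ) + 1) = ∑' m : ℤ, f m :=
  nat_int_inj.tsum_eq (nat_int_range f h0)

lemma summable_nat_int (f : ℤ → ℝ) (h0 : ∀ m : ℤ, m ≤ 0 → f m = 0)
    (h : Summable fun n : ℕ => f ((n : ℤ) + 1)) : Summable f := by
  refine (nat_int_inj.summable_iff ?_).mp h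
  intro x hx
  rcases le_or_gt x 0 with hle | hlt
  · exact h0 x hle
  · exact absurd ⟨(x - 1).toNat, by simp; omega⟩ hx

lemma summable_shift (f : ℤ → ℝ) (c : ℤ) (h : Summable f) :
    Summable (fun m : ℤ => f (m + c)) :=
  (Equiv.addRight c).summable_iff.mpr h

lemma aux_sum (k0 lam : ℝ) (hk0 : 0 < k0) (hlam : 1 < lam) (d : ℝ) (u v : ℤ → ℂ)
    (hu0 : ∀ n : ℤ, n ≤ 0 → u n = 0) (hv0 : ∀ n : ℤ, n ≤ 0 → v n = 0)
    (hu : Summable fun n : ℕ => (kk k0 lam ((n : ℤ) + 1)) ^ (2 * d) * ‖u ((n : ℤ) + 1)‖ ^ 2)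
    (hv : Summable fun n : ℕ => (kk k0 lam ((n : ℤ) + 1)) ^ (2 * (1 - 2 * d)) * ‖v ((n : ℤ) + 1)‖ ^ 2)
    (s i j l : ℤ) :
    Summable (fun m : ℤ => kk k0 lam (m + s) * (‖u (m + i)‖ * ‖u (m + j)‖ * ‖v (m + l)‖)) := by
  have hlam' : 0 < lam := by linarith
  have hsq : ∀ (k e : ℝ), 0 < k → (k ^ e) ^ 2 = k ^ (2 * e) := by
    intro k e hk
    rw [sq, ← Real.rpow_add hk]
    ring_nf
  have hgu_nn : ∀ m : ℤ, 0 ≤ kk k0 lam m ^ d * ‖u m‖ :=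
    fun m => mul_nonneg (Real.rpow_nonneg (kk_pos hk0 hlam' m).le _) (norm_nonneg _)
  have hgv_nn : ∀ m : ℤ, 0 ≤ kk k0 lam m ^ (1 - 2 * d) * ‖v m‖ :=
    fun m => mul_nonneg (Real.rpow_nonneg (kk_pos hk0 hlam' m).le _) (norm_nonneg _)
  have hgu2 : Summable (fun m : ℤ => (kk k0 lam m ^ d * ‖u m‖) ^ 2) := by
    apply summable_nat_int
    · intro m hm; simp [hu0 m hm]
    · refine hu.congr fun n => ?_
      rw [mul_pow, hsq _ _ (kk_pos hk0 hlam' _)]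
  have hgv2 : Summable (fun m : ℤ => (kk k0 lam m ^ (1 - 2 * d) * ‖v m‖) ^ 2) := by
    apply summable_nat_int
    · intro m hm; simp [hv0 m hm]
    · refine hv.congr fun n => ?_
      rw [mul_pow, hsq _ _ (kk_pos hk0 hlam' _)]
  set Bu : ℝ := Real.sqrt (∑' m : ℤ, (kk k0 lam m ^ d * ‖u m‖) ^ 2) with hBudef
  have hBu0 : 0 ≤ Bu := Real.sqrt_nonneg _
  have hBu : ∀ m : ℤ, kk k0 lam m ^ d * ‖u m‖ ≤ Bu := by
    intro m
    have h1 : (kk k0 lam m ^ d * ‖u m‖) ^ 2 ≤ ∑' m : ℤ, (kk k0 lam m ^ d * ‖u m‖) ^ 2 :=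
      Summable.le_tsum hgu2 m (fun _ _ => sq_nonneg _)
    calc kk k0 lam m ^ d * ‖u m‖ = Real.sqrt ((kk k0 lam m ^ d * ‖u m‖) ^ 2) :=
          (Real.sqrt_sq (hgu_nn m)).symm
      _ ≤ Bu := Real.sqrt_le_sqrt h1
  set W : ℝ := Real.exp (((s : ℝ) - d * (i : ℝ) - d * (j : ℝ) - (1 - 2 * d) * (l : ℝ)) *
    Real.log lam) with hWdef
  have hW : 0 < W := Real.exp_pos _
  have hpt : ∀ m : ℤ, kk k0 lam (m + s) * (‖u (m + i)‖ * ‖u (m + j)‖ * ‖v (m + l)‖)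
      = W * ((kk k0 lam (m + i) ^ d * ‖u (m + i)‖) * (kk k0 lam (m + j) ^ d * ‖u (m + j)‖)
        * (kk k0 lam (m + l) ^ (1 - 2 * d) * ‖v (m + l)‖)) := by
    intro m
    have e1 : kk k0 lam (m + s) = kk k0 lam (m + s) ^ (1 : ℝ) := (Real.rpow_one _).symm
    rw [e1, kk_rpow_exp hk0 hlam', kk_rpow_exp hk0 hlam' (m + i) d,
      kk_rpow_exp hk0 hlam' (m + j) d, kk_rpow_exp hk0 hlam' (m + l) (1 - 2 * d)]
    push_cast
    rw [hWdef]
    have key : Real.exp (((s : ℝ) - d * (i : ℝ) - d * (j : ℝ) - (1 - 2 * d) * (l : ℝ)) *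
          Real.log lam) *
        (Real.exp ((Real.log k0 + ((m : ℝ) + (i : ℝ)) * Real.log lam) * d) *
          (Real.exp ((Real.log k0 + ((m : ℝ) + (j : ℝ)) * Real.log lam) * d) *
            Real.exp ((Real.log k0 + ((m : ℝ) + (l : ℝ)) * Real.log lam) * (1 - 2 * d)))) =
        Real.exp ((Real.log k0 + ((m : ℝ) + (s : ℝ)) * Real.log lam) * 1) := by
      rw [← Real.exp_add, ← Real.exp_add, ← Real.exp_add]
      congr 1
      ring
    rw [← key]
    ring
  refine Summable.of_nonneg_of_le (fun m => ?_) (fun m => ?_)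
    ((((summable_shift _ j hgu2).add (summable_shift _ l hgv2)).mul_left (W * Bu / 2)))
  · exact mul_nonneg (kk_pos hk0 hlam' _).le
      (mul_nonneg (mul_nonneg (norm_nonneg _) (norm_nonneg _)) (norm_nonneg _))
  · rw [hpt m]
    have h2 : 2 * ((kk k0 lam (m + j) ^ d * ‖u (m + j)‖) *
        (kk k0 lam (m + l) ^ (1 - 2 * d) * ‖v (m + l)‖)) ≤
        (kk k0 lam (m + j) ^ d * ‖u (m + j)‖) ^ 2 +
        (kk k0 lam (m + l) ^ (1 - 2 * d) * ‖v (m + l)‖) ^ 2 := by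
      nlinarith [sq_nonneg ((kk k0 lam (m + j) ^ d * ‖u (m + j)‖) -
        (kk k0 lam (m + l) ^ (1 - 2 * d) * ‖v (m + l)‖))]
    nlinarith [hBu (m + i), hgu_nn (m + i), hgu_nn (m + j), hgv_nn (m + l), hW.le, hBu0,
      mul_nonneg (mul_nonneg (sub_nonneg.2 (hBu (m + i))) (hgu_nn (m + j))) (hgv_nn (m + l)),
      mul_le_mul_of_nonneg_left h2 (mul_nonneg hW.le hBu0),
      mul_nonneg (hgu_nn (m + j)) (hgv_nn (m + l))]

noncomputable def trm (C k0 lam : ℝ) (s : ℤ) (x y z : ℤ → ℂ) (i j l : ℤ) (m : ℤ) : ℂ :=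
  -Complex.I * (C : ℂ) * ((kk k0 lam (m + s) : ℝ) : ℂ) * x (m + i) * y (m + j) * z (m + l)

lemma trm_summable (k0 lam : ℝ) (hk0 : 0 < k0) (hlam : 1 < lam) (d : ℝ) (u v : ℤ → ℂ)
    (hu0 : ∀ n : ℤ, n ≤ 0 → u n = 0) (hv0 : ∀ n : ℤ, n ≤ 0 → v n = 0)
    (hu : Summable fun n : ℕ => (kk k0 lam ((n : ℤ) + 1)) ^ (2 * d) * ‖u ((n : ℤ) + 1)‖ ^ 2)
    (hv : Summable fun n : ℕ => (kk k0 lam ((n : ℤ) + 1)) ^ (2 * (1 - 2 * d)) * ‖v ((n : ℤ) + 1)‖ ^ 2)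
    (C : ℝ) (s i j l i' j' l' : ℤ) (x y z : ℤ → ℂ)
    (hpt : ∀ m : ℤ, ‖x (m + i)‖ * ‖y (m + j)‖ * ‖z (m + l)‖ =
      ‖u (m + i')‖ * ‖u (m + j')‖ * ‖v (m + l')‖) :
    Summable (fun m : ℤ => trm C k0 lam s x y z i j l m) := by
  have hlam' : 0 < lam := by linarith
  apply Summable.of_norm
  refine ((aux_sum k0 lam hk0 hlam d u v hu0 hv0 hu hv s i' j' l').mul_left |C|).congr
    fun m => ?_
  simp only [trm, norm_mul, norm_neg, Complex.norm_I, one_mul, Complex.norm_real,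
    Real.norm_eq_abs]
  rw [← hpt m, abs_of_pos (kk_pos hk0 hlam' _)]
  ring

noncomputable def cj (u : ℤ → ℂ) (m : ℤ) : ℂ := (starRingEnd ℂ) (u m)

/-- for `u ∈ V_d`, `v ∈ V_{1-2d}` and `a + b + c = 0`,
`⟨B(u,v), u⟩_d = -conj ⟨B(u,u), v⟩_{1-2d}` and `Re ⟨B(v,u), u⟩_d = 0`,
where the pairing is `⟨x,y⟩ = ∑_n x_n conj(y_n)`. -/
theorem sabra_buvv_identities
    (a b c k0 lam : ℝ) (hk0 : 0 < k0) (hlam : 1 < lam)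
    (habc : a + b + c = 0) (d : ℝ) (u v : ℤ → ℂ)
    (hu0 : ∀ n : ℤ, n ≤ 0 → u n = 0) (hv0 : ∀ n : ℤ, n ≤ 0 → v n = 0)
    (hu : Summable fun n : ℕ =>
      (kk k0 lam ((n : ℤ) + 1)) ^ (2 * d) * ‖u ((n : ℤ) + 1)‖ ^ 2)
    (hv : Summable fun n : ℕ =>
      (kk k0 lam ((n : ℤ) + 1)) ^ (2 * (1 - 2 * d)) * ‖v ((n : ℤ) + 1)‖ ^ 2) :
    (∑' n : ℕ, sB2 a b k0 lam u v ((n : ℤ) + 1) * (starRingEnd ℂ) (u ((n : ℤ) + 1))) =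
      -(starRingEnd ℂ)
        (∑' n : ℕ, sB2 a b k0 lam u u ((n : ℤ) + 1) * (starRingEnd ℂ) (v ((n : ℤ) + 1))) ∧
    (∑' n : ℕ, sB2 a b k0 lam v u ((n : ℤ) + 1) * (starRingEnd ℂ) (u ((n : ℤ) + 1))).re = 0 := by
  have SP1 : Summable (fun m : ℤ => trm a k0 lam 1 v (cj u) (cj u) 2 1 0 m) :=
    trm_summable k0 lam hk0 hlam d u v hu0 hv0 hu hv a 1 2 1 0 1 0 2 _ _ _
      (fun m => by simp only [cj, RCLike.norm_conj, add_zero]; try ring)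
  have SP2 : Summable (fun m : ℤ => trm b k0 lam 0 v (cj u) (cj u) 1 (-1) 0 m) :=
    trm_summable k0 lam hk0 hlam d u v hu0 hv0 hu hv b 0 1 (-1) 0 (-1) 0 1 _ _ _
      (fun m => by simp only [cj, RCLike.norm_conj, add_zero]; try ring)
  have SP3 : Summable (fun m : ℤ => trm a k0 lam (-1) u v (cj u) (-1) (-2) 0 m) :=
    trm_summable k0 lam hk0 hlam d u v hu0 hv0 hu hv a (-1) (-1) (-2) 0 (-1) 0 (-2) _ _ _
      (fun m => by simp only [cj, RCLike.norm_conj, add_zero]; try ring)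
  have SP4 : Summable (fun m : ℤ => trm b k0 lam (-1) v u (cj u) (-1) (-2) 0 m) :=
    trm_summable k0 lam hk0 hlam d u v hu0 hv0 hu hv b (-1) (-1) (-2) 0 (-2) 0 (-1) _ _ _
      (fun m => by simp only [cj, RCLike.norm_conj, add_zero]; try ring)
  have SG1 : Summable (fun m : ℤ => trm a k0 lam (-1) (cj u) (cj u) v (-1) (-2) 0 m) :=
    trm_summable k0 lam hk0 hlam d u v hu0 hv0 hu hv a (-1) (-1) (-2) 0 (-1) (-2) 0 _ _ _
      (fun m => by simp only [cj, RCLike.norm_conj, add_zero]; try ring)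
  have SG2 : Summable (fun m : ℤ => trm b k0 lam (-1) (cj u) (cj u) v (-1) (-2) 0 m) :=
    trm_summable k0 lam hk0 hlam d u v hu0 hv0 hu hv b (-1) (-1) (-2) 0 (-1) (-2) 0 _ _ _
      (fun m => by simp only [cj, RCLike.norm_conj, add_zero]; try ring)
  have SG3 : Summable (fun m : ℤ => trm a k0 lam 1 (cj u) u v 2 1 0 m) :=
    trm_summable k0 lam hk0 hlam d u v hu0 hv0 hu hv a 1 2 1 0 2 1 0 _ _ _
      (fun m => by simp only [cj, RCLike.norm_conj, add_zero]; try ring)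
  have SG4 : Summable (fun m : ℤ => trm b k0 lam 0 (cj u) u v 1 (-1) 0 m) :=
    trm_summable k0 lam hk0 hlam d u v hu0 hv0 hu hv b 0 1 (-1) 0 1 (-1) 0 _ _ _
      (fun m => by simp only [cj, RCLike.norm_conj, add_zero]; try ring)
  have SR1 : Summable (fun m : ℤ => trm a k0 lam 1 u (cj v) (cj u) 2 1 0 m) :=
    trm_summable k0 lam hk0 hlam d u v hu0 hv0 hu hv a 1 2 1 0 2 0 1 _ _ _
      (fun m => by simp only [cj, RCLike.norm_conj, add_zero]; try ring)
  have SR2 : Summable (fun m : ℤ => trm b k0 lam 0 u (cj v) (cj u) 1 (-1) 0 m) :=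
    trm_summable k0 lam hk0 hlam d u v hu0 hv0 hu hv b 0 1 (-1) 0 1 0 (-1) _ _ _
      (fun m => by simp only [cj, RCLike.norm_conj, add_zero]; try ring)
  have SR3 : Summable (fun m : ℤ => trm a k0 lam (-1) v u (cj u) (-1) (-2) 0 m) :=
    trm_summable k0 lam hk0 hlam d u v hu0 hv0 hu hv a (-1) (-1) (-2) 0 (-2) 0 (-1) _ _ _
      (fun m => by simp only [cj, RCLike.norm_conj, add_zero]; try ring)
  have SR4 : Summable (fun m : ℤ => trm b k0 lam (-1) u v (cj u) (-1) (-2) 0 m) :=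
    trm_summable k0 lam hk0 hlam d u v hu0 hv0 hu hv b (-1) (-1) (-2) 0 (-1) 0 (-2) _ _ _
      (fun m => by simp only [cj, RCLike.norm_conj, add_zero]; try ring)
  have SH1 : Summable (fun m : ℤ => trm a k0 lam 1 (cj u) v u 2 1 0 m) :=
    trm_summable k0 lam hk0 hlam d u v hu0 hv0 hu hv a 1 2 1 0 2 0 1 _ _ _
      (fun m => by simp only [cj, RCLike.norm_conj, add_zero]; try ring)
  have SH2 : Summable (fun m : ℤ => trm b k0 lam 0 (cj u) v u 1 (-1) 0 m) :=
    trm_summable k0 lam hk0 hlam d u v hu0 hv0 hu hv b 0 1 (-1) 0 1 0 (-1) _ _ _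
      (fun m => by simp only [cj, RCLike.norm_conj, add_zero]; try ring)
  have SH3 : Summable (fun m : ℤ => trm a k0 lam (-1) (cj v) (cj u) u (-1) (-2) 0 m) :=
    trm_summable k0 lam hk0 hlam d u v hu0 hv0 hu hv a (-1) (-1) (-2) 0 (-2) 0 (-1) _ _ _
      (fun m => by simp only [cj, RCLike.norm_conj, add_zero]; try ring)
  have SH4 : Summable (fun m : ℤ => trm b k0 lam (-1) (cj u) (cj v) u (-1) (-2) 0 m) :=
    trm_summable k0 lam hk0 hlam d u v hu0 hv0 hu hv b (-1) (-1) (-2) 0 (-1) 0 (-2) _ _ _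
      (fun m => by simp only [cj, RCLike.norm_conj, add_zero]; try ring)
  have e1 : (∑' m : ℤ, trm a k0 lam 1 v (cj u) (cj u) 2 1 0 m) = ∑' m : ℤ, trm a k0 lam (-1) (cj u) (cj u) v (-1) (-2) 0 m :=
    (tsum_congr fun m => by simp only [trm, cj]; ring_nf).trans
      (shift_tsum (fun m => trm a k0 lam (-1) (cj u) (cj u) v (-1) (-2) 0 m) (2))
  have e2 : (∑' m : ℤ, trm b k0 lam 0 v (cj u) (cj u) 1 (-1) 0 m) = ∑' m : ℤ, trm b k0 lam (-1) (cj u) (cj u) v (-1) (-2) 0 m :=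
    (tsum_congr fun m => by simp only [trm, cj]; ring_nf).trans
      (shift_tsum (fun m => trm b k0 lam (-1) (cj u) (cj u) v (-1) (-2) 0 m) (1))
  have e3 : (∑' m : ℤ, trm a k0 lam (-1) u v (cj u) (-1) (-2) 0 m) = ∑' m : ℤ, trm a k0 lam 1 (cj u) u v 2 1 0 m :=
    (tsum_congr fun m => by simp only [trm, cj]; ring_nf).trans
      (shift_tsum (fun m => trm a k0 lam 1 (cj u) u v 2 1 0 m) (-2))
  have e4 : (∑' m : ℤ, trm b k0 lam (-1) v u (cj u) (-1) (-2) 0 m) = ∑' m : ℤ, trm b k0 lam 0 (cj u) u v 1 (-1) 0 m :=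
    (tsum_congr fun m => by simp only [trm, cj]; ring_nf).trans
      (shift_tsum (fun m => trm b k0 lam 0 (cj u) u v 1 (-1) 0 m) (-1))
  have f1 : (∑' m : ℤ, trm a k0 lam 1 u (cj v) (cj u) 2 1 0 m) = ∑' m : ℤ, trm a k0 lam (-1) (cj v) (cj u) u (-1) (-2) 0 m :=
    (tsum_congr fun m => by simp only [trm, cj]; ring_nf).trans
      (shift_tsum (fun m => trm a k0 lam (-1) (cj v) (cj u) u (-1) (-2) 0 m) (2))
  have f2 : (∑' m : ℤ, trm b k0 lam 0 u (cj v) (cj u) 1 (-1) 0 m) = ∑' m : ℤ, trm b k0 lam (-1) (cj u) (cj v) u (-1) (-2) 0 m :=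
    (tsum_congr fun m => by simp only [trm, cj]; ring_nf).trans
      (shift_tsum (fun m => trm b k0 lam (-1) (cj u) (cj v) u (-1) (-2) 0 m) (1))
  have f3 : (∑' m : ℤ, trm a k0 lam (-1) v u (cj u) (-1) (-2) 0 m) = ∑' m : ℤ, trm a k0 lam 1 (cj u) v u 2 1 0 m :=
    (tsum_congr fun m => by simp only [trm, cj]; ring_nf).trans
      (shift_tsum (fun m => trm a k0 lam 1 (cj u) v u 2 1 0 m) (-2))
  have f4 : (∑' m : ℤ, trm b k0 lam (-1) u v (cj u) (-1) (-2) 0 m) = ∑' m : ℤ, trm b k0 lam 0 (cj u) v u 1 (-1) 0 m :=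
    (tsum_congr fun m => by simp only [trm, cj]; ring_nf).trans
      (shift_tsum (fun m => trm b k0 lam 0 (cj u) v u 1 (-1) 0 m) (-1))
  constructor
  · calc (∑' n : ℕ, sB2 a b k0 lam u v ((n : ℤ) + 1) * (starRingEnd ℂ) (u ((n : ℤ) + 1)))
        = ∑' m : ℤ, sB2 a b k0 lam u v m * (starRingEnd ℂ) (u m) :=
          tsum_nat_int (fun m => sB2 a b k0 lam u v m * (starRingEnd ℂ) (u m))
            (fun m hm => by simp [hu0 m hm])
      _ = ∑' m : ℤ, (trm a k0 lam 1 v (cj u) (cj u) 2 1 0 m + (trm b k0 lam 0 v (cj u) (cj u) 1 (-1) 0 m + (trm a k0 lam (-1) u v (cj u) (-1) (-2) 0 m + trm b k0 lam (-1) v u (cj u) (-1) (-2) 0 m))) :=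
          tsum_congr fun m => by
            simp only [sB2, trm, cj, sub_eq_add_neg, add_zero]; ring
      _ = (∑' m : ℤ, trm a k0 lam 1 v (cj u) (cj u) 2 1 0 m) + ((∑' m : ℤ, trm b k0 lam 0 v (cj u) (cj u) 1 (-1) 0 m) + ((∑' m : ℤ, trm a k0 lam (-1) u v (cj u) (-1) (-2) 0 m)
            + (∑' m : ℤ, trm b k0 lam (-1) v u (cj u) (-1) (-2) 0 m))) := by
          rw [Summable.tsum_add SP1 (SP2.add (SP3.add SP4)), Summable.tsum_add SP2 (SP3.add SP4),
            Summable.tsum_add SP3 SP4]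
      _ = (∑' m : ℤ, trm a k0 lam (-1) (cj u) (cj u) v (-1) (-2) 0 m) + ((∑' m : ℤ, trm b k0 lam (-1) (cj u) (cj u) v (-1) (-2) 0 m) + ((∑' m : ℤ, trm a k0 lam 1 (cj u) u v 2 1 0 m)
            + (∑' m : ℤ, trm b k0 lam 0 (cj u) u v 1 (-1) 0 m))) := by rw [e1, e2, e3, e4]
      _ = ∑' m : ℤ, (trm a k0 lam (-1) (cj u) (cj u) v (-1) (-2) 0 m + (trm b k0 lam (-1) (cj u) (cj u) v (-1) (-2) 0 m + (trm a k0 lam 1 (cj u) u v 2 1 0 m + trm b k0 lam 0 (cj u) u v 1 (-1) 0 m))) := by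
          rw [Summable.tsum_add SG1 (SG2.add (SG3.add SG4)), Summable.tsum_add SG2 (SG3.add SG4),
            Summable.tsum_add SG3 SG4]
      _ = ∑' m : ℤ, -((starRingEnd ℂ) (sB2 a b k0 lam u u m * (starRingEnd ℂ) (v m))) :=
          tsum_congr fun m => by
            simp only [sB2, trm, cj, map_mul, map_add, map_neg, Complex.conj_I,
              Complex.conj_conj, Complex.conj_ofReal, sub_eq_add_neg, add_zero]
            ring
      _ = -((starRingEnd ℂ) (∑' m : ℤ, sB2 a b k0 lam u u m * (starRingEnd ℂ) (v m))) := by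
          rw [tsum_neg]
          congr 1
          simp only [starRingEnd_apply]
          exact tsum_star.symm
      _ = -((starRingEnd ℂ)
            (∑' n : ℕ, sB2 a b k0 lam u u ((n : ℤ) + 1) * (starRingEnd ℂ) (v ((n : ℤ) + 1)))) := by
          rw [tsum_nat_int (fun m => sB2 a b k0 lam u u m * (starRingEnd ℂ) (v m))
            (fun m hm => by simp [hv0 m hm])]
  · have hz : (∑' n : ℕ, sB2 a b k0 lam v u ((n : ℤ) + 1) * (starRingEnd ℂ) (u ((n : ℤ) + 1)))
        = ∑' m : ℤ, sB2 a b k0 lam v u m * (starRingEnd ℂ) (u m) :=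
      tsum_nat_int (fun m => sB2 a b k0 lam v u m * (starRingEnd ℂ) (u m))
        (fun m hm => by simp [hu0 m hm])
    have key : (∑' m : ℤ, sB2 a b k0 lam v u m * (starRingEnd ℂ) (u m))
        = -((starRingEnd ℂ) (∑' m : ℤ, sB2 a b k0 lam v u m * (starRingEnd ℂ) (u m))) := by
      calc (∑' m : ℤ, sB2 a b k0 lam v u m * (starRingEnd ℂ) (u m))
          = ∑' m : ℤ, (trm a k0 lam 1 u (cj v) (cj u) 2 1 0 m + (trm b k0 lam 0 u (cj v) (cj u) 1 (-1) 0 m + (trm a k0 lam (-1) v u (cj u) (-1) (-2) 0 m + trm b k0 lam (-1) u v (cj u) (-1) (-2) 0 m))) :=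
            tsum_congr fun m => by
              simp only [sB2, trm, cj, sub_eq_add_neg, add_zero]; ring
        _ = (∑' m : ℤ, trm a k0 lam 1 u (cj v) (cj u) 2 1 0 m) + ((∑' m : ℤ, trm b k0 lam 0 u (cj v) (cj u) 1 (-1) 0 m) + ((∑' m : ℤ, trm a k0 lam (-1) v u (cj u) (-1) (-2) 0 m)
              + (∑' m : ℤ, trm b k0 lam (-1) u v (cj u) (-1) (-2) 0 m))) := by
            rw [Summable.tsum_add SR1 (SR2.add (SR3.add SR4)), Summable.tsum_add SR2 (SR3.add SR4),
              Summable.tsum_add SR3 SR4]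
        _ = (∑' m : ℤ, trm a k0 lam (-1) (cj v) (cj u) u (-1) (-2) 0 m) + ((∑' m : ℤ, trm b k0 lam (-1) (cj u) (cj v) u (-1) (-2) 0 m) + ((∑' m : ℤ, trm a k0 lam 1 (cj u) v u 2 1 0 m)
              + (∑' m : ℤ, trm b k0 lam 0 (cj u) v u 1 (-1) 0 m))) := by rw [f1, f2, f3, f4]
        _ = ∑' m : ℤ, (trm a k0 lam (-1) (cj v) (cj u) u (-1) (-2) 0 m + (trm b k0 lam (-1) (cj u) (cj v) u (-1) (-2) 0 m + (trm a k0 lam 1 (cj u) v u 2 1 0 m + trm b k0 lam 0 (cj u) v u 1 (-1) 0 m))) := by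
            rw [Summable.tsum_add SH3 (SH4.add (SH1.add SH2)), Summable.tsum_add SH4 (SH1.add SH2),
              Summable.tsum_add SH1 SH2]
        _ = ∑' m : ℤ, -((starRingEnd ℂ) (sB2 a b k0 lam v u m * (starRingEnd ℂ) (u m))) :=
            tsum_congr fun m => by
              simp only [sB2, trm, cj, map_mul, map_add, map_neg, Complex.conj_I,
                Complex.conj_conj, Complex.conj_ofReal, sub_eq_add_neg, add_zero]
              ring
        _ = -((starRingEnd ℂ) (∑' m : ℤ, sB2 a b k0 lam v u m * (starRingEnd ℂ) (u m))) := by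
            rw [tsum_neg]
            congr 1
            simp only [starRingEnd_apply]
            exact tsum_star.symm
    rw [hz]
    have hre := congrArg Complex.re key
    simp only [Complex.neg_re, Complex.conj_re] at hre
    linarith
end

section
/- If a weak solution u of the forced inviscid sabra shell model satisfies u ∈ L^∞([0,T], V_{1/3}), then it conserves energy: |u(t)|² = |u^{in}|² + 2∫₀ᵗ Re(f, u(s)) ds for all t ∈ [0,T]. -/
open Complex MeasureTheory

/-- Membership in `V = D(A^{1/2})` (test functions): zero boundary components and
`∑ k_n² |v_n|² < ∞`. -/
def InTestV (k0 lam : ℝ) (v : ℤ → ℂ) : Prop :=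
  (∀ n : ℤ, n ≤ 0 → v n = 0) ∧
  Summable fun n : ℕ => (kk k0 lam ((n : ℤ) + 1)) ^ 2 * ‖v ((n : ℤ) + 1)‖ ^ 2

/-- A weak solution of the forced inviscid sabra shell model on `[0,T]`:
`u ∈ L^∞([0,T],H) ∩ C([0,T],H_w)` (componentwise continuity plus a uniform ℓ² bound)
satisfying `⟨u(t),v⟩ + ∫₀ᵗ ⟨B(u(s),u(s)),v⟩ ds = ⟨u^{in},v⟩ + t⟨f,v⟩` for all `v ∈ V`. -/
def IsWeakSolution (a b c k0 lam T : ℝ) (uin f : ℤ → ℂ) (u : ℝ → ℤ → ℂ) : Prop :=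
  (∀ t : ℝ, ∀ n : ℤ, n ≤ 0 → u t n = 0) ∧
  (∃ M : ℝ, ∀ t ∈ Set.Icc (0 : ℝ) T,
    (Summable fun n : ℕ => ‖u t ((n : ℤ) + 1)‖ ^ 2) ∧
    (∑' n : ℕ, ‖u t ((n : ℤ) + 1)‖ ^ 2) ≤ M) ∧
  (∀ n : ℤ, ContinuousOn (fun t => u t n) (Set.Icc (0 : ℝ) T)) ∧
  (∀ v : ℤ → ℂ, InTestV k0 lam v → ∀ t ∈ Set.Icc (0 : ℝ) T,
    (∑' n : ℕ, u t ((n : ℤ) + 1) * (starRingEnd ℂ) (v ((n : ℤ) + 1))) +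
      (∫ s in (0 : ℝ)..t,
        ∑' n : ℕ, sB a b c k0 lam (u s) ((n : ℤ) + 1) * (starRingEnd ℂ) (v ((n : ℤ) + 1))) =
    (∑' n : ℕ, uin ((n : ℤ) + 1) * (starRingEnd ℂ) (v ((n : ℤ) + 1))) +
      (t : ℂ) * (∑' n : ℕ, f ((n : ℤ) + 1) * (starRingEnd ℂ) (v ((n : ℤ) + 1))))


/-- `Q n = Im(k_{n+1} w_{n+2} conj w_{n+1} conj w_n)`. -/
noncomputable def QQ (k0 lam : ℝ) (w : ℤ → ℂ) (n : ℤ) : ℝ :=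
  (((kk k0 lam (n + 1) : ℝ) : ℂ) * w (n + 2) * (starRingEnd ℂ) (w (n + 1))
    * (starRingEnd ℂ) (w n)).im

lemma sB_re (a b c k0 lam : ℝ) (w : ℤ → ℂ) (n : ℤ) :
    (sB a b c k0 lam w n * (starRingEnd ℂ) (w n)).re
      = a * QQ k0 lam w n + b * QQ k0 lam w (n - 1) + c * QQ k0 lam w (n - 2) := by
  have h1 : n - 1 + 1 = n := by ring
  have h2 : n - 1 + 2 = n + 1 := by ring
  have h3 : n - 2 + 1 = n - 1 := by ring
  have h4 : n - 2 + 2 = n := by ring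
  unfold sB QQ
  rw [h1, h2, h3, h4]
  simp only [Complex.mul_re, Complex.mul_im, Complex.neg_re, Complex.neg_im,
    Complex.I_re, Complex.I_im, Complex.add_re, Complex.add_im, Complex.sub_re,
    Complex.sub_im, Complex.ofReal_re, Complex.ofReal_im, Complex.conj_re,
    Complex.conj_im]
  ring

lemma telescope_sum (a b c : ℝ) (habc : a + b + c = 0) (Q : ℤ → ℝ)
    (hQ0 : Q 0 = 0) (hQm1 : Q (-1) = 0) :
    ∀ N : ℕ, ∑ i ∈ Finset.range (N + 1),
      (a * Q ((i : ℤ) + 1) + b * Q ((i : ℤ) + 1 - 1) + c * Q ((i : ℤ) + 1 - 2))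
      = a * Q ((N : ℤ) + 1) - c * Q (N : ℤ) := by
  intro N
  induction N with
  | zero => simp [hQ0, hQm1]
  | succ N ih =>
      rw [Finset.sum_range_succ, ih]
      push_cast
      have e1 : (N : ℤ) + 1 + 1 - 1 = (N : ℤ) + 1 := by ring
      have e2 : (N : ℤ) + 1 + 1 - 2 = (N : ℤ) := by ring
      rw [e1, e2]
      linear_combination Q ((N : ℤ) + 1) * habc

lemma norm_sq_c (z : ℂ) : ‖z‖ ^ 2 = z.re ^ 2 + z.im ^ 2 := by
  rw [Complex.sq_norm, Complex.normSq_apply]; ring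


/-- a weak solution of the forced inviscid sabra shell model lying in
`L^∞([0,T], V_{1/3})` conserves energy:
`|u(t)|² = |u^{in}|² + 2∫₀ᵗ Re(f, u(s)) ds` for all `t ∈ [0,T]`. -/
theorem sabra_energy_conservation_V13
    (a b c k0 lam : ℝ) (hk0 : 0 < k0) (hlam : 1 < lam) (habc : a + b + c = 0)
    (T : ℝ) (hT : 0 < T)
    (uin f : ℤ → ℂ)
    (huin0 : ∀ n : ℤ, n ≤ 0 → uin n = 0) (hf0 : ∀ n : ℤ, n ≤ 0 → f n = 0)
    (huin : Summable fun n : ℕ => ‖uin ((n : ℤ) + 1)‖ ^ 2)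
    (hf : Summable fun n : ℕ => ‖f ((n : ℤ) + 1)‖ ^ 2)
    (u : ℝ → ℤ → ℂ)
    (hweak : IsWeakSolution a b c k0 lam T uin f u)
    -- u ∈ L^∞([0,T], V_{1/3})
    (hreg : ∃ M : ℝ, ∀ t ∈ Set.Icc (0 : ℝ) T,
      (Summable fun n : ℕ =>
        (kk k0 lam ((n : ℤ) + 1)) ^ ((2 : ℝ) / 3) * ‖u t ((n : ℤ) + 1)‖ ^ 2) ∧
      (∑' n : ℕ, (kk k0 lam ((n : ℤ) + 1)) ^ ((2 : ℝ) / 3) * ‖u t ((n : ℤ) + 1)‖ ^ 2) ≤ M) :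
    ∀ t ∈ Set.Icc (0 : ℝ) T,
      (∑' n : ℕ, ‖u t ((n : ℤ) + 1)‖ ^ 2) =
        (∑' n : ℕ, ‖uin ((n : ℤ) + 1)‖ ^ 2) +
          2 * ∫ s in (0 : ℝ)..t,
            (∑' n : ℕ, f ((n : ℤ) + 1) * (starRingEnd ℂ) (u s ((n : ℤ) + 1))).re := by
  obtain ⟨h0, ⟨M0, hM0⟩, hcont, hwk⟩ := hweak
  obtain ⟨M1, hM1⟩ := hreg
  have hlam0 : (0 : ℝ) < lam := lt_trans one_pos hlam
  have hkpos : ∀ n : ℤ, 0 < kk k0 lam n := fun n => mul_pos hk0 (zpow_pos hlam0 n)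
  have h0T : (0 : ℝ) ∈ Set.Icc (0 : ℝ) T := ⟨le_refl _, le_of_lt hT⟩
  -- Step A : componentwise equation
  have comp_eq : ∀ m : ℤ, 1 ≤ m → ∀ t ∈ Set.Icc (0 : ℝ) T,
      u t m + (∫ s in (0 : ℝ)..t, sB a b c k0 lam (u s) m) = uin m + (t : ℂ) * f m := by
    intro m hm t ht
    set v : ℤ → ℂ := fun n => if n = m then 1 else 0 with hv_def
    have hts : ∀ g : ℤ → ℂ,
        (∑' n : ℕ, g ((n : ℤ) + 1) * (starRingEnd ℂ) (v ((n : ℤ) + 1))) = g m := by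
      intro g
      have h1 : (((m - 1).toNat : ℤ) + 1) = m := by omega
      rw [tsum_eq_single (m - 1).toNat]
      · rw [h1]; simp [hv_def]
      · intro n hn
        have : ¬ ((n : ℤ) + 1 = m) := by omega
        simp [hv_def, this]
    have hv : InTestV k0 lam v := by
      constructor
      · intro n hn
        have : ¬ (n = m) := by omega
        simp [hv_def, this]
      · apply summable_of_ne_finset_zero (s := {(m - 1).toNat})
        intro n hn
        simp only [Finset.mem_singleton] at hn
        have : ¬ ((n : ℤ) + 1 = m) := by omega
        simp [hv_def, this]
    have h2 := hwk v hv t ht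
    rw [hts (u t), hts uin, hts f,
      intervalIntegral.integral_congr
        (g := fun s => sB a b c k0 lam (u s) m)
        (fun s _ => hts (sB a b c k0 lam (u s)))] at h2
    exact h2
  -- Step B : continuity
  have hstar : ∀ z : ℂ, (starRingEnd ℂ) z = star z := fun _ => rfl
  have hsBc : ∀ n : ℤ, ContinuousOn (fun s => sB a b c k0 lam (u s) n)
      (Set.Icc (0 : ℝ) T) := by
    intro n
    unfold sB
    simp only [hstar]
    exact continuousOn_const.mul
      ((((continuousOn_const.mul (hcont (n + 2))).mul (hcont (n + 1)).star).add
        ((continuousOn_const.mul (hcont (n + 1))).mul (hcont (n - 1)).star)).sub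
        ((continuousOn_const.mul (hcont (n - 1))).mul (hcont (n - 2))))
  have hQc : ∀ n : ℤ, ContinuousOn (fun s => QQ k0 lam (u s) n)
      (Set.Icc (0 : ℝ) T) := by
    intro n
    unfold QQ
    simp only [hstar]
    exact Complex.continuous_im.comp_continuousOn
      (((continuousOn_const.mul (hcont (n + 2))).mul (hcont (n + 1)).star).mul
        (hcont n).star)
  -- Step C : per-mode energy identity
  have u0 : ∀ m : ℤ, 1 ≤ m → u 0 m = uin m := by
    intro m hm
    have h := comp_eq m hm 0 h0T
    simpa using h
  have energy_m : ∀ m : ℤ, 1 ≤ m → ∀ t ∈ Set.Icc (0 : ℝ) T,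
      ‖u t m‖ ^ 2 = ‖uin m‖ ^ 2 + ∫ s in (0 : ℝ)..t,
        (2 * ((f m - sB a b c k0 lam (u s) m) * (starRingEnd ℂ) (u s m)).re) := by
    intro m hm t ht
    set φ : ℝ → ℂ :=
      fun s => uin m + (s : ℂ) * f m - ∫ r in (0 : ℝ)..s, sB a b c k0 lam (u r) m with hφ_def
    have hφu : ∀ s ∈ Set.Icc (0 : ℝ) T, φ s = u s m := by
      intro s hs
      have h := comp_eq m hm s hs
      simp only [hφ_def]
      linear_combination -h
    have hgi : ∀ s ∈ Set.Icc (0 : ℝ) T,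
        IntervalIntegrable (fun r => sB a b c k0 lam (u r) m) volume 0 s := by
      intro s hs
      apply ContinuousOn.intervalIntegrable
      apply (hsBc m).mono
      rw [Set.uIcc_of_le hs.1]
      exact Set.Icc_subset_Icc (le_refl _) hs.2
    have hφderiv : ∀ x ∈ Set.Ioo (0 : ℝ) t,
        HasDerivAt φ (f m - sB a b c k0 lam (u x) m) x := by
      intro x hx
      have hxT : x ∈ Set.Ioo (0 : ℝ) T := ⟨hx.1, lt_of_lt_of_le hx.2 ht.2⟩
      have hxmem : Set.Icc (0 : ℝ) T ∈ nhds x := Icc_mem_nhds hxT.1 hxT.2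
      have hca : ContinuousAt (fun r => sB a b c k0 lam (u r) m) x :=
        (hsBc m).continuousAt hxmem
      have hmeas : StronglyMeasurableAtFilter (fun r => sB a b c k0 lam (u r) m) (nhds x) :=
        ((hsBc m).mono Set.Ioo_subset_Icc_self).stronglyMeasurableAtFilter isOpen_Ioo x hxT
      have hint : HasDerivAt (fun s => ∫ r in (0 : ℝ)..s, sB a b c k0 lam (u r) m)
          (sB a b c k0 lam (u x) m) x :=
        intervalIntegral.integral_hasDerivAt_right
          (hgi x ⟨le_of_lt hxT.1, le_of_lt hxT.2⟩) hmeas hca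
      have hlin : HasDerivAt (fun s : ℝ => uin m + (s : ℂ) * f m) (f m) x := by
        have h1 : HasDerivAt (fun s : ℝ => (s : ℂ)) 1 x := by
          exact Complex.ofRealCLM.hasDerivAt (x := x)
        simpa using (h1.mul_const (f m)).const_add (uin m)
      exact hlin.sub hint
    have hsub : Set.Icc (0 : ℝ) t ⊆ Set.Icc (0 : ℝ) T :=
      Set.Icc_subset_Icc (le_refl _) ht.2
    have hψcont : ContinuousOn (fun s => ‖φ s‖ ^ 2) (Set.Icc (0 : ℝ) t) := by
      exact (((hcont m).mono hsub).norm.pow 2).congr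
        (fun s hs => by rw [hφu s (hsub hs)]; rfl)
    have hhc : ContinuousOn (fun s =>
        (2 * ((f m - sB a b c k0 lam (u s) m) * (starRingEnd ℂ) (u s m)).re))
        (Set.Icc (0 : ℝ) T) := by
      simp only [hstar]
      exact continuousOn_const.mul (Complex.continuous_re.comp_continuousOn
        ((continuousOn_const.sub (hsBc m)).mul (hcont m).star))
    have hhint : IntervalIntegrable (fun s =>
        (2 * ((f m - sB a b c k0 lam (u s) m) * (starRingEnd ℂ) (u s m)).re)) volume 0 t := by
      apply ContinuousOn.intervalIntegrable
      apply hhc.mono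
      rw [Set.uIcc_of_le ht.1]
      exact Set.Icc_subset_Icc (le_refl _) ht.2
    have hFTC := intervalIntegral.integral_eq_sub_of_hasDeriv_right_of_le ht.1
      (f := fun s => ‖φ s‖ ^ 2)
      (f' := fun s => (2 * ((f m - sB a b c k0 lam (u s) m) * (starRingEnd ℂ) (u s m)).re))
      hψcont ?_ hhint
    · simp only [hφu t ht, hφu 0 h0T, u0 m hm] at hFTC
      linarith [hFTC]
    · intro x hx
      have hxI : x ∈ Set.Icc (0 : ℝ) T :=
        ⟨le_of_lt hx.1, le_of_lt (lt_of_lt_of_le hx.2 ht.2)⟩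
      have hd := hφderiv x hx
      have hre : HasDerivAt (fun s => (φ s).re) ((f m - sB a b c k0 lam (u x) m).re) x :=
        Complex.reCLM.hasFDerivAt.comp_hasDerivAt x hd
      have him : HasDerivAt (fun s => (φ s).im) ((f m - sB a b c k0 lam (u x) m).im) x :=
        Complex.imCLM.hasFDerivAt.comp_hasDerivAt x hd
      have hsq : HasDerivAt (fun s => (φ s).re ^ 2 + (φ s).im ^ 2)
          (2 * ((f m - sB a b c k0 lam (u x) m) * (starRingEnd ℂ) (φ x)).re) x := by
        have h1 := (hre.mul hre).add (him.mul him)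
        have hfun : (fun s => (φ s).re ^ 2 + (φ s).im ^ 2) = (((fun s => (φ s).re) * fun s => (φ s).re)
            + (fun s => (φ s).im) * fun s => (φ s).im) := by
          funext s; simp only [Pi.add_apply, Pi.mul_apply]; ring
        rw [hfun]
        exact h1.congr_deriv (by simp only [Complex.mul_re, Complex.conj_re, Complex.conj_im]; ring)
      have heq : (fun s => ‖φ s‖ ^ 2) = fun s => (φ s).re ^ 2 + (φ s).im ^ 2 := by
        funext s; exact norm_sq_c (φ s)
      rw [heq]
      rw [show φ x = u x m from hφu x hxI] at hsq
      exact hsq.hasDerivWithinAt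
  -- Step D : finite-sum energy identity with telescoping
  have hQ0 : ∀ s : ℝ, QQ k0 lam (u s) 0 = 0 := by
    intro s
    unfold QQ
    rw [h0 s 0 le_rfl]
    simp
  have hQm1 : ∀ s : ℝ, QQ k0 lam (u s) (-1) = 0 := by
    intro s
    unfold QQ
    rw [h0 s (-1) (by norm_num)]
    simp
  have hptw : ∀ s : ℝ, ∀ N : ℕ,
      (∑ i ∈ Finset.range (N + 1),
        (2 * ((f ((i : ℤ) + 1) - sB a b c k0 lam (u s) ((i : ℤ) + 1))
          * (starRingEnd ℂ) (u s ((i : ℤ) + 1))).re))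
      = 2 * (∑ i ∈ Finset.range (N + 1),
            (f ((i : ℤ) + 1) * (starRingEnd ℂ) (u s ((i : ℤ) + 1))).re)
        - 2 * (a * QQ k0 lam (u s) ((N : ℤ) + 1) - c * QQ k0 lam (u s) (N : ℤ)) := by
    intro s N
    have htel := telescope_sum a b c habc (QQ k0 lam (u s)) (hQ0 s) (hQm1 s) N
    have hterm : ∀ i ∈ Finset.range (N + 1),
        (2 * ((f ((i : ℤ) + 1) - sB a b c k0 lam (u s) ((i : ℤ) + 1))
          * (starRingEnd ℂ) (u s ((i : ℤ) + 1))).re)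
        = 2 * (f ((i : ℤ) + 1) * (starRingEnd ℂ) (u s ((i : ℤ) + 1))).re
          - 2 * (a * QQ k0 lam (u s) ((i : ℤ) + 1) + b * QQ k0 lam (u s) ((i : ℤ) + 1 - 1)
              + c * QQ k0 lam (u s) ((i : ℤ) + 1 - 2)) := by
      intro i _
      rw [← sB_re a b c k0 lam (u s) ((i : ℤ) + 1)]
      rw [sub_mul, Complex.sub_re]
      ring
    rw [Finset.sum_congr rfl hterm, Finset.sum_sub_distrib, ← Finset.mul_sum,
      ← Finset.mul_sum, htel]
  have hhc_all : ∀ m : ℤ, ContinuousOn (fun s =>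
      (2 * ((f m - sB a b c k0 lam (u s) m) * (starRingEnd ℂ) (u s m)).re))
      (Set.Icc (0 : ℝ) T) := by
    intro m
    simp only [hstar]
    exact continuousOn_const.mul (Complex.continuous_re.comp_continuousOn
      ((continuousOn_const.sub (hsBc m)).mul (hcont m).star))
  have hIcc_sub : ∀ t ∈ Set.Icc (0 : ℝ) T, Set.uIcc (0 : ℝ) t ⊆ Set.Icc (0 : ℝ) T := by
    intro t ht
    rw [Set.uIcc_of_le ht.1]
    exact Set.Icc_subset_Icc (le_refl _) ht.2
  have hFc : ∀ N : ℕ, ContinuousOn (fun s => ∑ i ∈ Finset.range (N + 1),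
      (f ((i : ℤ) + 1) * (starRingEnd ℂ) (u s ((i : ℤ) + 1))).re)
      (Set.Icc (0 : ℝ) T) := by
    intro N
    apply continuousOn_finset_sum
    intro i _
    simp only [hstar]
    exact Complex.continuous_re.comp_continuousOn
      (continuousOn_const.mul (hcont ((i : ℤ) + 1)).star)
  have hGc : ∀ N : ℕ, ContinuousOn (fun s =>
      a * QQ k0 lam (u s) ((N : ℤ) + 1) - c * QQ k0 lam (u s) (N : ℤ))
      (Set.Icc (0 : ℝ) T) := fun N =>
    (continuousOn_const.mul (hQc ((N : ℤ) + 1))).sub (continuousOn_const.mul (hQc (N : ℤ)))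
  have key_id : ∀ N : ℕ, ∀ t ∈ Set.Icc (0 : ℝ) T,
      (∑ i ∈ Finset.range (N + 1), ‖u t ((i : ℤ) + 1)‖ ^ 2)
      = (∑ i ∈ Finset.range (N + 1), ‖uin ((i : ℤ) + 1)‖ ^ 2)
        + 2 * (∫ s in (0 : ℝ)..t, ∑ i ∈ Finset.range (N + 1),
            (f ((i : ℤ) + 1) * (starRingEnd ℂ) (u s ((i : ℤ) + 1))).re)
        - 2 * (∫ s in (0 : ℝ)..t,
            (a * QQ k0 lam (u s) ((N : ℤ) + 1) - c * QQ k0 lam (u s) (N : ℤ))) := by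
    intro N t ht
    have hint_i : ∀ i ∈ Finset.range (N + 1), IntervalIntegrable (fun s =>
        (2 * ((f ((i : ℤ) + 1) - sB a b c k0 lam (u s) ((i : ℤ) + 1))
          * (starRingEnd ℂ) (u s ((i : ℤ) + 1))).re)) volume 0 t := by
      intro i _
      exact ((hhc_all ((i : ℤ) + 1)).mono (hIcc_sub t ht)).intervalIntegrable
    calc (∑ i ∈ Finset.range (N + 1), ‖u t ((i : ℤ) + 1)‖ ^ 2)
        = ∑ i ∈ Finset.range (N + 1), (‖uin ((i : ℤ) + 1)‖ ^ 2 + ∫ s in (0 : ℝ)..t,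
            (2 * ((f ((i : ℤ) + 1) - sB a b c k0 lam (u s) ((i : ℤ) + 1))
              * (starRingEnd ℂ) (u s ((i : ℤ) + 1))).re)) :=
          Finset.sum_congr rfl (fun i _ => energy_m ((i : ℤ) + 1) (by omega) t ht)
      _ = (∑ i ∈ Finset.range (N + 1), ‖uin ((i : ℤ) + 1)‖ ^ 2)
          + ∑ i ∈ Finset.range (N + 1), ∫ s in (0 : ℝ)..t,
            (2 * ((f ((i : ℤ) + 1) - sB a b c k0 lam (u s) ((i : ℤ) + 1))
              * (starRingEnd ℂ) (u s ((i : ℤ) + 1))).re) := Finset.sum_add_distrib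
      _ = (∑ i ∈ Finset.range (N + 1), ‖uin ((i : ℤ) + 1)‖ ^ 2)
          + ∫ s in (0 : ℝ)..t, ∑ i ∈ Finset.range (N + 1),
            (2 * ((f ((i : ℤ) + 1) - sB a b c k0 lam (u s) ((i : ℤ) + 1))
              * (starRingEnd ℂ) (u s ((i : ℤ) + 1))).re) := by
          rw [intervalIntegral.integral_finset_sum hint_i]
      _ = (∑ i ∈ Finset.range (N + 1), ‖uin ((i : ℤ) + 1)‖ ^ 2)
          + ∫ s in (0 : ℝ)..t,
            (2 * (∑ i ∈ Finset.range (N + 1),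
              (f ((i : ℤ) + 1) * (starRingEnd ℂ) (u s ((i : ℤ) + 1))).re)
            - 2 * (a * QQ k0 lam (u s) ((N : ℤ) + 1) - c * QQ k0 lam (u s) (N : ℤ))) := by
          rw [intervalIntegral.integral_congr (fun s _ => hptw s N)]
      _ = (∑ i ∈ Finset.range (N + 1), ‖uin ((i : ℤ) + 1)‖ ^ 2)
          + 2 * (∫ s in (0 : ℝ)..t, ∑ i ∈ Finset.range (N + 1),
              (f ((i : ℤ) + 1) * (starRingEnd ℂ) (u s ((i : ℤ) + 1))).re)
          - 2 * (∫ s in (0 : ℝ)..t,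
              (a * QQ k0 lam (u s) ((N : ℤ) + 1) - c * QQ k0 lam (u s) (N : ℤ))) := by
          rw [intervalIntegral.integral_sub
            (((hFc N).mono (hIcc_sub t ht)).intervalIntegrable.const_mul 2)
            (((hGc N).mono (hIcc_sub t ht)).intervalIntegrable.const_mul 2),
            intervalIntegral.integral_const_mul, intervalIntegral.integral_const_mul]
          ring
  -- Step E : limits
  -- kk algebra
  have hlamne : lam ≠ 0 := ne_of_gt hlam0
  have hkey : ∀ n : ℤ, kk k0 lam (n + 1)
      = ((kk k0 lam n) * kk k0 lam (n + 1) * kk k0 lam (n + 2)) ^ ((1 : ℝ) / 3) := by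
    intro n
    have hcube : kk k0 lam n * kk k0 lam (n + 1) * kk k0 lam (n + 2)
        = (kk k0 lam (n + 1)) ^ (3 : ℕ) := by
      unfold kk
      rw [show (n + 2 : ℤ) = (n + 1) + 1 by ring, zpow_add₀ hlamne (n + 1) 1,
        zpow_add₀ hlamne n 1, zpow_one]
      ring
    rw [hcube, ← Real.rpow_natCast (kk k0 lam (n + 1)) 3,
      ← Real.rpow_mul (le_of_lt (hkpos (n + 1)))]
    norm_num
  have hsqrt_e : ∀ s : ℝ, ∀ m : ℤ,
      Real.sqrt ((kk k0 lam m) ^ ((2 : ℝ) / 3) * ‖u s m‖ ^ 2)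
        = (kk k0 lam m) ^ ((1 : ℝ) / 3) * ‖u s m‖ := by
    intro s m
    have h2 : (kk k0 lam m) ^ ((2 : ℝ) / 3) = ((kk k0 lam m) ^ ((1 : ℝ) / 3)) ^ (2 : ℕ) := by
      rw [← Real.rpow_natCast ((kk k0 lam m) ^ ((1 : ℝ) / 3)) 2,
        ← Real.rpow_mul (le_of_lt (hkpos m))]
      norm_num
    rw [h2, ← mul_pow, Real.sqrt_sq (mul_nonneg (Real.rpow_nonneg (le_of_lt (hkpos m)) _) (norm_nonneg _))]
  -- bound for |QQ|
  have hQb : ∀ s : ℝ, ∀ m : ℤ, |QQ k0 lam (u s) m| ≤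
      ((kk k0 lam m) ^ ((1 : ℝ) / 3) * ‖u s m‖)
      * ((kk k0 lam (m + 1)) ^ ((1 : ℝ) / 3) * ‖u s (m + 1)‖)
      * ((kk k0 lam (m + 2)) ^ ((1 : ℝ) / 3) * ‖u s (m + 2)‖) := by
    intro s m
    have h1 : |QQ k0 lam (u s) m| ≤
        kk k0 lam (m + 1) * ‖u s (m + 2)‖ * ‖u s (m + 1)‖ * ‖u s m‖ := by
      unfold QQ
      refine le_trans (Complex.abs_im_le_norm _) ?_
      simp only [norm_mul, RCLike.norm_conj, Complex.norm_real, Real.norm_eq_abs]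
      rw [abs_of_pos (hkpos (m + 1))]
    refine le_trans h1 (le_of_eq ?_)
    conv_lhs => rw [hkey m]
    rw [Real.mul_rpow (mul_nonneg (le_of_lt (hkpos m)) (le_of_lt (hkpos (m + 1)))) (le_of_lt (hkpos (m + 2))),
      Real.mul_rpow (le_of_lt (hkpos m)) (le_of_lt (hkpos (m + 1)))]
    ring
  -- E-term bound
  have hebound : ∀ s ∈ Set.Icc (0 : ℝ) T, ∀ m : ℤ, 1 ≤ m →
      (kk k0 lam m) ^ ((2 : ℝ) / 3) * ‖u s m‖ ^ 2 ≤ M1 := by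
    intro s hs m hm
    have h1 : (((m - 1).toNat : ℤ) + 1) = m := by omega
    have h2 := Summable.le_tsum (hM1 s hs).1 (m - 1).toNat
      (fun j _ => mul_nonneg (Real.rpow_nonneg (le_of_lt (hkpos _)) _) (sq_nonneg _))
    rw [h1] at h2
    exact le_trans h2 (hM1 s hs).2
  have hdbound : ∀ s ∈ Set.Icc (0 : ℝ) T, ∀ m : ℤ, 1 ≤ m →
      (kk k0 lam m) ^ ((1 : ℝ) / 3) * ‖u s m‖ ≤ Real.sqrt M1 := by
    intro s hs m hm
    rw [← hsqrt_e s m]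
    exact Real.sqrt_le_sqrt (hebound s hs m hm)
  have hdnn : ∀ s : ℝ, ∀ m : ℤ, 0 ≤ (kk k0 lam m) ^ ((1 : ℝ) / 3) * ‖u s m‖ := by
    intro s m
    exact mul_nonneg (Real.rpow_nonneg (le_of_lt (hkpos _)) _) (norm_nonneg _)
  have hM1nn : 0 ≤ M1 := by
    refine le_trans ?_ ((hM1 0 h0T).2)
    exact tsum_nonneg
      (fun n => mul_nonneg (Real.rpow_nonneg (le_of_lt (hkpos _)) _) (sq_nonneg _))
  -- uniform bound on QQ for nonnegative index
  have hQQb : ∀ s ∈ Set.Icc (0 : ℝ) T, ∀ m : ℤ, 0 ≤ m →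
      |QQ k0 lam (u s) m| ≤ Real.sqrt M1 * Real.sqrt M1 * Real.sqrt M1 := by
    intro s hs m hm
    rcases eq_or_lt_of_le hm with h | h
    · rw [← h, hQ0 s]
      simp only [abs_zero]
      positivity
    · have hm1 : 1 ≤ m := h
      refine le_trans (hQb s m) ?_
      have b1 := hdbound s hs m hm1
      have b2 := hdbound s hs (m + 1) (by omega)
      have b3 := hdbound s hs (m + 2) (by omega)
      have := Real.sqrt_nonneg M1
      exact mul_le_mul (mul_le_mul b1 b2 (hdnn s (m + 1)) (by linarith))
        b3 (hdnn s (m + 2)) (by positivity)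
  -- pointwise convergence of QQ to 0
  have htendQ : ∀ s ∈ Set.Icc (0 : ℝ) T,
      Filter.Tendsto (fun N : ℕ => QQ k0 lam (u s) ((N : ℤ) + 1))
        Filter.atTop (nhds 0) := by
    intro s hs
    have hbnd : ∀ N : ℕ, ‖QQ k0 lam (u s) ((N : ℤ) + 1)‖ ≤
        Real.sqrt ((kk k0 lam ((N : ℤ) + 1)) ^ ((2 : ℝ) / 3) * ‖u s ((N : ℤ) + 1)‖ ^ 2)
          * (Real.sqrt M1 * Real.sqrt M1) := by
      intro N
      rw [Real.norm_eq_abs]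
      refine le_trans (hQb s ((N : ℤ) + 1)) ?_
      rw [hsqrt_e]
      have b2 := hdbound s hs ((N : ℤ) + 1 + 1) (by omega)
      have b3 := hdbound s hs ((N : ℤ) + 1 + 2) (by omega)
      have hn1 := hdnn s ((N : ℤ) + 1)
      have hn2 := hdnn s ((N : ℤ) + 1 + 1)
      have hn3 := hdnn s ((N : ℤ) + 1 + 2)
      have := Real.sqrt_nonneg M1
      calc ((kk k0 lam ((N : ℤ) + 1)) ^ ((1 : ℝ) / 3) * ‖u s ((N : ℤ) + 1)‖)
            * ((kk k0 lam ((N : ℤ) + 1 + 1)) ^ ((1 : ℝ) / 3) * ‖u s ((N : ℤ) + 1 + 1)‖)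
            * ((kk k0 lam ((N : ℤ) + 1 + 2)) ^ ((1 : ℝ) / 3) * ‖u s ((N : ℤ) + 1 + 2)‖)
          ≤ ((kk k0 lam ((N : ℤ) + 1)) ^ ((1 : ℝ) / 3) * ‖u s ((N : ℤ) + 1)‖)
            * Real.sqrt M1 * Real.sqrt M1 := by
            exact mul_le_mul (mul_le_mul (le_refl _) b2 hn2 hn1) b3 hn3
              (by positivity)
        _ = ((kk k0 lam ((N : ℤ) + 1)) ^ ((1 : ℝ) / 3) * ‖u s ((N : ℤ) + 1)‖)
            * (Real.sqrt M1 * Real.sqrt M1) := by ring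
    refine squeeze_zero_norm hbnd ?_
    have h1 : Filter.Tendsto (fun N : ℕ =>
          (kk k0 lam ((N : ℤ) + 1)) ^ ((2 : ℝ) / 3) * ‖u s ((N : ℤ) + 1)‖ ^ 2)
        Filter.atTop (nhds 0) := (hM1 s hs).1.tendsto_atTop_zero
    have h2 := h1.sqrt
    rw [Real.sqrt_zero] at h2
    have h3 := h2.mul_const (Real.sqrt M1 * Real.sqrt M1)
    simpa using h3
  have htendQ' : ∀ s ∈ Set.Icc (0 : ℝ) T,
      Filter.Tendsto (fun N : ℕ => QQ k0 lam (u s) (N : ℤ))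
        Filter.atTop (nhds 0) := by
    intro s hs
    rw [← Filter.tendsto_add_atTop_iff_nat 1]
    have := htendQ s hs
    exact this.congr (fun N => congrArg (QQ k0 lam (u s)) (by push_cast; ring))
  -- summability of f * conj u
  have hfu_sum : ∀ s ∈ Set.Icc (0 : ℝ) T, Summable (fun n : ℕ =>
      f ((n : ℤ) + 1) * (starRingEnd ℂ) (u s ((n : ℤ) + 1))) := by
    intro s hs
    apply Summable.of_norm
    refine Summable.of_nonneg_of_le (fun n => norm_nonneg _) (fun n => ?_)
      ((hf.add (hM0 s hs).1).div_const 2)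
    rw [norm_mul, RCLike.norm_conj]
    nlinarith [sq_nonneg (‖f ((n : ℤ) + 1)‖ - ‖u s ((n : ℤ) + 1)‖),
      norm_nonneg (f ((n : ℤ) + 1)), norm_nonneg (u s ((n : ℤ) + 1))]
  have hFlim : ∀ s ∈ Set.Icc (0 : ℝ) T,
      Filter.Tendsto (fun N : ℕ => ∑ i ∈ Finset.range (N + 1),
        (f ((i : ℤ) + 1) * (starRingEnd ℂ) (u s ((i : ℤ) + 1))).re) Filter.atTop
      (nhds ((∑' n : ℕ, f ((n : ℤ) + 1) * (starRingEnd ℂ) (u s ((n : ℤ) + 1))).re)) := by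
    intro s hs
    have h1 : HasSum (fun n : ℕ => (f ((n : ℤ) + 1) * (starRingEnd ℂ) (u s ((n : ℤ) + 1))).re)
        ((∑' n : ℕ, f ((n : ℤ) + 1) * (starRingEnd ℂ) (u s ((n : ℤ) + 1))).re) := by
      have := ((hfu_sum s hs).hasSum).mapL Complex.reCLM
      simpa using this
    exact h1.tendsto_sum_nat.comp (Filter.tendsto_add_atTop_nat 1)
  have hFbound : ∀ s ∈ Set.Icc (0 : ℝ) T, ∀ N : ℕ,
      |∑ i ∈ Finset.range (N + 1),
        (f ((i : ℤ) + 1) * (starRingEnd ℂ) (u s ((i : ℤ) + 1))).re|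
      ≤ ((∑' n : ℕ, ‖f ((n : ℤ) + 1)‖ ^ 2) + M0) / 2 := by
    intro s hs N
    have h1 : ∀ i ∈ Finset.range (N + 1),
        |(f ((i : ℤ) + 1) * (starRingEnd ℂ) (u s ((i : ℤ) + 1))).re|
        ≤ (‖f ((i : ℤ) + 1)‖ ^ 2 + ‖u s ((i : ℤ) + 1)‖ ^ 2) / 2 := by
      intro i _
      refine le_trans (Complex.abs_re_le_norm _) ?_
      rw [norm_mul, RCLike.norm_conj]
      nlinarith [sq_nonneg (‖f ((i : ℤ) + 1)‖ - ‖u s ((i : ℤ) + 1)‖),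
        norm_nonneg (f ((i : ℤ) + 1)), norm_nonneg (u s ((i : ℤ) + 1))]
    have hA := Summable.sum_le_tsum (Finset.range (N + 1)) (fun i _ => sq_nonneg _) hf
    have hB := le_trans (Summable.sum_le_tsum (Finset.range (N + 1))
      (fun i _ => sq_nonneg _) (hM0 s hs).1) (hM0 s hs).2
    calc |∑ i ∈ Finset.range (N + 1),
        (f ((i : ℤ) + 1) * (starRingEnd ℂ) (u s ((i : ℤ) + 1))).re|
        ≤ ∑ i ∈ Finset.range (N + 1),
          |(f ((i : ℤ) + 1) * (starRingEnd ℂ) (u s ((i : ℤ) + 1))).re| :=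
          Finset.abs_sum_le_sum_abs _ _
      _ ≤ ∑ i ∈ Finset.range (N + 1),
          (‖f ((i : ℤ) + 1)‖ ^ 2 + ‖u s ((i : ℤ) + 1)‖ ^ 2) / 2 := Finset.sum_le_sum h1
      _ = ((∑ i ∈ Finset.range (N + 1), ‖f ((i : ℤ) + 1)‖ ^ 2)
          + ∑ i ∈ Finset.range (N + 1), ‖u s ((i : ℤ) + 1)‖ ^ 2) / 2 := by
          rw [← Finset.sum_add_distrib, Finset.sum_div]
      _ ≤ ((∑' n : ℕ, ‖f ((n : ℤ) + 1)‖ ^ 2) + M0) / 2 := by linarith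
  -- now fix t and take limits
  intro t ht
  have hsubI : Set.uIoc (0 : ℝ) t ⊆ Set.Icc (0 : ℝ) T := by
    rw [Set.uIoc_of_le ht.1]
    exact subset_trans Set.Ioc_subset_Icc_self (Set.Icc_subset_Icc le_rfl ht.2)
  have htendF : Filter.Tendsto (fun N : ℕ => ∫ s in (0 : ℝ)..t,
      ∑ i ∈ Finset.range (N + 1),
        (f ((i : ℤ) + 1) * (starRingEnd ℂ) (u s ((i : ℤ) + 1))).re) Filter.atTop
      (nhds (∫ s in (0 : ℝ)..t,
        (∑' n : ℕ, f ((n : ℤ) + 1) * (starRingEnd ℂ) (u s ((n : ℤ) + 1))).re)) := by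
    apply intervalIntegral.tendsto_integral_filter_of_dominated_convergence
      (bound := fun _ => ((∑' n : ℕ, ‖f ((n : ℤ) + 1)‖ ^ 2) + M0) / 2)
    · exact Filter.Eventually.of_forall (fun N =>
        ((hFc N).mono hsubI).aestronglyMeasurable measurableSet_uIoc)
    · exact Filter.Eventually.of_forall (fun N =>
        Filter.Eventually.of_forall (fun x hx => by
          rw [Real.norm_eq_abs]; exact hFbound x (hsubI hx) N))
    · exact intervalIntegrable_const
    · exact Filter.Eventually.of_forall (fun x hx => hFlim x (hsubI hx))
  have htendG : Filter.Tendsto (fun N : ℕ => ∫ s in (0 : ℝ)..t,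
      (a * QQ k0 lam (u s) ((N : ℤ) + 1) - c * QQ k0 lam (u s) (N : ℤ))) Filter.atTop
      (nhds 0) := by
    have h : Filter.Tendsto (fun N : ℕ => ∫ s in (0 : ℝ)..t,
        (a * QQ k0 lam (u s) ((N : ℤ) + 1) - c * QQ k0 lam (u s) (N : ℤ))) Filter.atTop
        (nhds (∫ _ in (0 : ℝ)..t, (0 : ℝ))) := by
      apply intervalIntegral.tendsto_integral_filter_of_dominated_convergence
        (bound := fun _ => |a| * (Real.sqrt M1 * Real.sqrt M1 * Real.sqrt M1)
          + |c| * (Real.sqrt M1 * Real.sqrt M1 * Real.sqrt M1))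
      · exact Filter.Eventually.of_forall (fun N =>
          ((hGc N).mono hsubI).aestronglyMeasurable measurableSet_uIoc)
      · refine Filter.Eventually.of_forall (fun N =>
          Filter.Eventually.of_forall (fun x hx => ?_))
        rw [Real.norm_eq_abs]
        have q1 := hQQb x (hsubI hx) ((N : ℤ) + 1) (by omega)
        have q2 := hQQb x (hsubI hx) (N : ℤ) (by omega)
        calc |a * QQ k0 lam (u x) ((N : ℤ) + 1) - c * QQ k0 lam (u x) (N : ℤ)|
            ≤ |a * QQ k0 lam (u x) ((N : ℤ) + 1)| + |c * QQ k0 lam (u x) (N : ℤ)| :=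
              abs_sub _ _
          _ = |a| * |QQ k0 lam (u x) ((N : ℤ) + 1)| + |c| * |QQ k0 lam (u x) (N : ℤ)| := by
              rw [abs_mul, abs_mul]
          _ ≤ |a| * (Real.sqrt M1 * Real.sqrt M1 * Real.sqrt M1)
              + |c| * (Real.sqrt M1 * Real.sqrt M1 * Real.sqrt M1) := by
              have := abs_nonneg a
              have := abs_nonneg c
              gcongr
      · exact intervalIntegrable_const
      · refine Filter.Eventually.of_forall (fun x hx => ?_)
        have h1 := ((htendQ x (hsubI hx)).const_mul a).sub
          ((htendQ' x (hsubI hx)).const_mul c)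
        simpa using h1
    rw [intervalIntegral.integral_zero] at h
    exact h
  have htendE : Filter.Tendsto (fun N : ℕ =>
      ∑ i ∈ Finset.range (N + 1), ‖u t ((i : ℤ) + 1)‖ ^ 2) Filter.atTop
      (nhds (∑' n : ℕ, ‖u t ((n : ℤ) + 1)‖ ^ 2)) :=
    (hM0 t ht).1.hasSum.tendsto_sum_nat.comp (Filter.tendsto_add_atTop_nat 1)
  have htendU : Filter.Tendsto (fun N : ℕ =>
      ∑ i ∈ Finset.range (N + 1), ‖uin ((i : ℤ) + 1)‖ ^ 2) Filter.atTop
      (nhds (∑' n : ℕ, ‖uin ((n : ℤ) + 1)‖ ^ 2)) :=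
    huin.hasSum.tendsto_sum_nat.comp (Filter.tendsto_add_atTop_nat 1)
  have hRHS : Filter.Tendsto (fun N : ℕ =>
      (∑ i ∈ Finset.range (N + 1), ‖uin ((i : ℤ) + 1)‖ ^ 2)
      + 2 * (∫ s in (0 : ℝ)..t, ∑ i ∈ Finset.range (N + 1),
          (f ((i : ℤ) + 1) * (starRingEnd ℂ) (u s ((i : ℤ) + 1))).re)
      - 2 * (∫ s in (0 : ℝ)..t,
          (a * QQ k0 lam (u s) ((N : ℤ) + 1) - c * QQ k0 lam (u s) (N : ℤ)))) Filter.atTop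
      (nhds ((∑' n : ℕ, ‖uin ((n : ℤ) + 1)‖ ^ 2)
        + 2 * (∫ s in (0 : ℝ)..t,
          (∑' n : ℕ, f ((n : ℤ) + 1) * (starRingEnd ℂ) (u s ((n : ℤ) + 1))).re) - 2 * 0)) :=
    (htendU.add (htendF.const_mul 2)).sub (htendG.const_mul 2)
  have hEq : (fun N : ℕ => ∑ i ∈ Finset.range (N + 1), ‖u t ((i : ℤ) + 1)‖ ^ 2)
      = fun N : ℕ =>
        (∑ i ∈ Finset.range (N + 1), ‖uin ((i : ℤ) + 1)‖ ^ 2)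
        + 2 * (∫ s in (0 : ℝ)..t, ∑ i ∈ Finset.range (N + 1),
            (f ((i : ℤ) + 1) * (starRingEnd ℂ) (u s ((i : ℤ) + 1))).re)
        - 2 * (∫ s in (0 : ℝ)..t,
            (a * QQ k0 lam (u s) ((N : ℤ) + 1) - c * QQ k0 lam (u s) (N : ℤ))) :=
    funext (fun N => key_id N t ht)
  rw [hEq] at htendE
  have hfin := tendsto_nhds_unique htendE hRHS
  rw [hfin]
  ring
end

section
/- Weak solutions of the inviscid sabra shell model are unique in the class L¹([0,T], w^{1,∞}): if u, v are two weak solutions with u(0) = v(0) and both ∫₀ᵀ ‖u(s)‖_{w^{1,∞}} ds < ∞ and ∫₀ᵀ ‖v(s)‖_{w^{1,∞}} ds < ∞, then u(t) = v(t) for all t ∈ [0,T]. -/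
open Complex MeasureTheory

/-- The `w^{1,∞}` norm `sup_n k_n |u_n|`. -/
noncomputable def W1 (k0 lam : ℝ) (v : ℤ → ℂ) : ℝ :=
  ⨆ n : ℕ, kk k0 lam ((n : ℤ) + 1) * ‖v ((n : ℤ) + 1)‖

section Aux

lemma aux_kk_pos {k0 lam : ℝ} (hk0 : 0 < k0) (hlam : 0 < lam) (m : ℤ) : 0 < kk k0 lam m := by
  unfold kk; positivity

lemma aux_kk_succ {k0 : ℝ} (lam : ℝ) (hlam : 0 < lam) (m : ℤ) :
    kk k0 lam (m + 1) = lam * kk k0 lam m := by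
  unfold kk; rw [zpow_add_one₀ (ne_of_gt hlam)]; ring

lemma aux_shift_sum_le (g : ℤ → ℝ) (hg0 : ∀ i : ℤ, i ≤ 0 → g i = 0) (hgnn : ∀ i, 0 ≤ g i)
    (hsum : Summable fun n : ℕ => g ((n : ℤ) + 1)) (c : ℤ) (N : ℕ) :
    ∑ j ∈ Finset.range N, g ((j : ℤ) + c) ≤ ∑' n : ℕ, g ((n : ℤ) + 1) := by
  classical
  set S := (Finset.range N).filter (fun j : ℕ => 1 ≤ (j : ℤ) + c) with hS
  have h1 : ∑ j ∈ Finset.range N, g ((j : ℤ) + c) = ∑ j ∈ S, g ((j : ℤ) + c) := by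
    rw [hS, Finset.sum_filter]
    refine Finset.sum_congr rfl fun j _ => ?_
    by_cases h : 1 ≤ (j : ℤ) + c
    · simp [h]
    · rw [if_neg h]
      exact hg0 _ (by omega)
  have h2 : ∑ j ∈ S, g ((j : ℤ) + c)
      = ∑ n ∈ S.image (fun j : ℕ => ((j : ℤ) + c - 1).toNat), g ((n : ℤ) + 1) := by
    rw [Finset.sum_image]
    · refine Finset.sum_congr rfl fun j hj => ?_
      have hj' : 1 ≤ (j : ℤ) + c := (Finset.mem_filter.mp hj).2
      congr 1
      omega
    · intro i hi j hj hij
      have hi' : 1 ≤ (i : ℤ) + c := (Finset.mem_filter.mp hi).2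
      have hj' : 1 ≤ (j : ℤ) + c := (Finset.mem_filter.mp hj).2
      simp only at hij
      omega
  rw [h1, h2]
  exact Summable.sum_le_tsum _ (fun i _ => hgnn _) hsum

lemma aux_W1_bound {k0 lam : ℝ} (hk0 : 0 < k0) (hlam : 0 < lam) (x : ℤ → ℂ)
    (hb : BddAbove (Set.range fun n : ℕ => kk k0 lam ((n : ℤ) + 1) * ‖x ((n : ℤ) + 1)‖))
    (h0 : ∀ n : ℤ, n ≤ 0 → x n = 0) (m : ℤ) :
    kk k0 lam m * ‖x m‖ ≤ W1 k0 lam x := by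
  rcases le_or_gt m 0 with hm | hm
  · rw [h0 m hm]
    simp only [norm_zero, mul_zero]
    refine le_trans ?_ (le_ciSup hb 0 :
      kk k0 lam (((0:ℕ) : ℤ) + 1) * ‖x (((0:ℕ) : ℤ) + 1)‖ ≤ W1 k0 lam x)
    exact mul_nonneg (aux_kk_pos hk0 hlam _).le (norm_nonneg _)
  · have h1 : kk k0 lam (((m - 1).toNat : ℤ) + 1) * ‖x (((m - 1).toNat : ℤ) + 1)‖ ≤ W1 k0 lam x :=
      le_ciSup hb (m - 1).toNat
    have h2 : ((m - 1).toNat : ℤ) + 1 = m := by omega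
    rwa [h2] at h1

lemma aux_W1_nonneg {k0 lam : ℝ} (hk0 : 0 < k0) (hlam : 0 < lam) (x : ℤ → ℂ)
    (hb : BddAbove (Set.range fun n : ℕ => kk k0 lam ((n : ℤ) + 1) * ‖x ((n : ℤ) + 1)‖))
    (h0 : ∀ n : ℤ, n ≤ 0 → x n = 0) : 0 ≤ W1 k0 lam x :=
  le_trans (le_of_eq (by rw [h0 0 le_rfl]; simp)) (aux_W1_bound hk0 hlam x hb h0 0)

lemma aux_cont_sB (a b c k0 lam : ℝ) (x : ℝ → ℤ → ℂ) (hx : ∀ n, Continuous fun s => x s n)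
    (m : ℤ) : Continuous fun s => sB a b c k0 lam (x s) m := by
  unfold sB
  simp only [starRingEnd_apply]
  fun_prop

lemma aux_component (a b c k0 lam T : ℝ) (uin f : ℤ → ℂ) (u : ℝ → ℤ → ℂ)
    (hu : IsWeakSolution a b c k0 lam T uin f u) (j : ℕ) :
    ∀ t ∈ Set.Icc (0:ℝ) T,
      u t ((j : ℤ) + 1) + (∫ s in (0:ℝ)..t, sB a b c k0 lam (u s) ((j : ℤ) + 1))
        = uin ((j : ℤ) + 1) + (t : ℂ) * f ((j : ℤ) + 1) := by
  classical
  obtain ⟨h0, hM, hcont, hweak⟩ := hu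
  set e : ℤ → ℂ := fun i => if i = (j : ℤ) + 1 then 1 else 0 with he
  have hV : InTestV k0 lam e := by
    constructor
    · intro n hn
      simp only [he]
      rw [if_neg (by omega)]
    · apply summable_of_ne_finset_zero (s := ({j} : Finset ℕ))
      intro n hn
      simp only [Finset.mem_singleton] at hn
      have hz : e ((n : ℤ) + 1) = 0 := by
        simp only [he]
        rw [if_neg (by omega)]
      rw [hz]
      simp
  have key : ∀ F : ℕ → ℂ, (∑' n : ℕ, F n * (starRingEnd ℂ) (e ((n : ℤ) + 1))) = F j := by
    intro F
    rw [tsum_eq_single j]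
    · simp only [he, if_pos rfl, map_one, mul_one]
    · intro n hn
      have hz : e ((n : ℤ) + 1) = 0 := by
        simp only [he]
        rw [if_neg (by omega)]
      rw [hz]
      simp
  intro t ht
  have := hweak e hV t ht
  simp only [key] at this
  exact this

end Aux
set_option maxHeartbeats 1600000 in
/-- weak solutions of the forced inviscid sabra shell model are unique in
the class `L¹([0,T], w^{1,∞})`. -/
theorem sabra_weak_uniqueness_L1_w1inf
    (a b c k0 lam : ℝ) (hk0 : 0 < k0) (hlam : 1 < lam) (habc : a + b + c = 0)
    (T : ℝ) (hT : 0 < T)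
    (uin f : ℤ → ℂ)
    (huin0 : ∀ n : ℤ, n ≤ 0 → uin n = 0) (hf0 : ∀ n : ℤ, n ≤ 0 → f n = 0)
    (huin : Summable fun n : ℕ => ‖uin ((n : ℤ) + 1)‖ ^ 2)
    (hf : Summable fun n : ℕ => ‖f ((n : ℤ) + 1)‖ ^ 2)
    (u v : ℝ → ℤ → ℂ)
    (hu : IsWeakSolution a b c k0 lam T uin f u)
    (hv : IsWeakSolution a b c k0 lam T uin f v)
    -- u, v ∈ L¹([0,T], w^{1,∞})
    (hubdd : ∀ t ∈ Set.Icc (0 : ℝ) T,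
      BddAbove (Set.range fun n : ℕ => kk k0 lam ((n : ℤ) + 1) * ‖u t ((n : ℤ) + 1)‖))
    (hvbdd : ∀ t ∈ Set.Icc (0 : ℝ) T,
      BddAbove (Set.range fun n : ℕ => kk k0 lam ((n : ℤ) + 1) * ‖v t ((n : ℤ) + 1)‖))
    (huL1 : MeasureTheory.IntegrableOn (fun t => W1 k0 lam (u t)) (Set.Icc (0 : ℝ) T))
    (hvL1 : MeasureTheory.IntegrableOn (fun t => W1 k0 lam (v t)) (Set.Icc (0 : ℝ) T)) :
    ∀ t ∈ Set.Icc (0 : ℝ) T, u t = v t := by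
  classical
  have hlam0 : (0:ℝ) < lam := lt_trans one_pos hlam
  have hT0 : (0:ℝ) ≤ T := le_of_lt hT
  have hcompu := aux_component a b c k0 lam T uin f u hu
  have hcompv := aux_component a b c k0 lam T uin f v hv
  obtain ⟨hu0, ⟨Mu, hMu⟩, hucont, huweak⟩ := hu
  obtain ⟨hv0, ⟨Mv, hMv⟩, hvcont, hvweak⟩ := hv
  -- clamp to [0,T]
  set proj : ℝ → ℝ := fun s => max 0 (min s T) with hproj
  have hprojmem : ∀ s, proj s ∈ Set.Icc (0:ℝ) T :=
    fun s => ⟨le_max_left _ _, max_le hT0 (min_le_right _ _)⟩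
  have hprojid : ∀ s ∈ Set.Icc (0:ℝ) T, proj s = s := by
    intro s hs
    simp only [hproj]
    rw [min_eq_left hs.2, max_eq_right hs.1]
  have hprojcont : Continuous proj := continuous_const.max (continuous_id.min continuous_const)
  set x : ℝ → ℤ → ℂ := fun s n => u (proj s) n with hxdef
  set z : ℝ → ℤ → ℂ := fun s n => v (proj s) n with hzdef
  have hxcont : ∀ n, Continuous fun s => x s n :=
    fun n => (hucont n).comp_continuous hprojcont hprojmem
  have hzcont : ∀ n, Continuous fun s => z s n :=
    fun n => (hvcont n).comp_continuous hprojcont hprojmem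
  have hxval : ∀ s ∈ Set.Icc (0:ℝ) T, x s = u s := by
    intro s hs; funext n; simp only [hxdef, hprojid s hs]
  have hzval : ∀ s ∈ Set.Icc (0:ℝ) T, z s = v s := by
    intro s hs; funext n; simp only [hzdef, hprojid s hs]
  -- the difference of nonlinear terms, componentwise
  set D : ℕ → ℝ → ℂ := fun j s =>
    sB a b c k0 lam (x s) ((j:ℤ)+1) - sB a b c k0 lam (z s) ((j:ℤ)+1) with hDdef
  have hDcont : ∀ j, Continuous (D j) := fun j =>
    (aux_cont_sB a b c k0 lam x hxcont _).sub (aux_cont_sB a b c k0 lam z hzcont _)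
  have hDval : ∀ j : ℕ, ∀ s ∈ Set.Icc (0:ℝ) T,
      D j s = sB a b c k0 lam (u s) ((j:ℤ)+1) - sB a b c k0 lam (v s) ((j:ℤ)+1) := by
    intro j s hs
    simp only [hDdef, hxval s hs, hzval s hs]
  -- the primitive
  set G : ℕ → ℝ → ℂ := fun j t => -∫ s in (0:ℝ)..t, D j s with hGdef
  have hGderiv : ∀ j t, HasDerivAt (G j) (-(D j t)) t := fun j t =>
    (((hDcont j).integral_hasStrictDerivAt 0 t).hasDerivAt).neg
  have hGcont : ∀ j, Continuous (G j) :=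
    fun j => continuous_iff_continuousAt.mpr fun t => (hGderiv j t).continuousAt
  have hGval : ∀ j : ℕ, ∀ t ∈ Set.Icc (0:ℝ) T, G j t = u t ((j:ℤ)+1) - v t ((j:ℤ)+1) := by
    intro j t ht
    have hsub : Set.uIcc (0:ℝ) t ⊆ Set.Icc (0:ℝ) T := by
      rw [Set.uIcc_of_le ht.1]
      exact Set.Icc_subset_Icc le_rfl ht.2
    have hcongru : (∫ s in (0:ℝ)..t, sB a b c k0 lam (x s) ((j:ℤ)+1))
        = ∫ s in (0:ℝ)..t, sB a b c k0 lam (u s) ((j:ℤ)+1) := by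
      refine intervalIntegral.integral_congr fun s hs => ?_
      rw [hxval s (hsub hs)]
    have hcongrv : (∫ s in (0:ℝ)..t, sB a b c k0 lam (z s) ((j:ℤ)+1))
        = ∫ s in (0:ℝ)..t, sB a b c k0 lam (v s) ((j:ℤ)+1) := by
      refine intervalIntegral.integral_congr fun s hs => ?_
      rw [hzval s (hsub hs)]
    have hsplit : (∫ s in (0:ℝ)..t, D j s)
        = (∫ s in (0:ℝ)..t, sB a b c k0 lam (x s) ((j:ℤ)+1))
          - ∫ s in (0:ℝ)..t, sB a b c k0 lam (z s) ((j:ℤ)+1) := by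
      simp only [hDdef]
      exact intervalIntegral.integral_sub
        ((aux_cont_sB a b c k0 lam x hxcont _).intervalIntegrable _ _)
        ((aux_cont_sB a b c k0 lam z hzcont _).intervalIntegrable _ _)
    have h1 := hcompu j t ht
    have h2 := hcompv j t ht
    simp only [hGdef, hsplit, hcongru, hcongrv]
    have e1 : (∫ s in (0:ℝ)..t, sB a b c k0 lam (u s) ((j:ℤ)+1))
        = uin ((j:ℤ)+1) + (t:ℂ) * f ((j:ℤ)+1) - u t ((j:ℤ)+1) := by
      linear_combination h1
    have e2 : (∫ s in (0:ℝ)..t, sB a b c k0 lam (v s) ((j:ℤ)+1))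
        = uin ((j:ℤ)+1) + (t:ℂ) * f ((j:ℤ)+1) - v t ((j:ℤ)+1) := by
      linear_combination h2
    rw [e1, e2]
    ring
  -- energy densities
  set h : ℕ → ℝ → ℝ := fun j s => 2 * ((-(D j s)) * (starRingEnd ℂ) (G j s)).re with hhdef
  have hhcont : ∀ j, Continuous (h j) := by
    intro j
    simp only [hhdef, starRingEnd_apply]
    exact continuous_const.mul (Complex.continuous_re.comp
      (((hDcont j).neg).mul (continuous_star.comp (hGcont j))))
  have hFderiv : ∀ j t, HasDerivAt (fun τ => ‖G j τ‖^2) (h j t) t := by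
    intro j t
    have hd := hGderiv j t
    have hre : HasDerivAt (fun τ => (G j τ).re) (-(D j t)).re t :=
      Complex.reCLM.hasFDerivAt.comp_hasDerivAt t hd
    have him : HasDerivAt (fun τ => (G j τ).im) (-(D j t)).im t :=
      Complex.imCLM.hasFDerivAt.comp_hasDerivAt t hd
    have h1 : HasDerivAt
        (fun τ => (G j τ).re * (G j τ).re + (G j τ).im * (G j τ).im)
        ((-(D j t)).re * (G j t).re + (G j t).re * (-(D j t)).re
          + ((-(D j t)).im * (G j t).im + (G j t).im * (-(D j t)).im)) t :=
      (hre.mul hre).add (him.mul him)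
    have heq : (fun τ => ‖G j τ‖^2)
        = fun τ => (G j τ).re * (G j τ).re + (G j τ).im * (G j τ).im := by
      funext τ
      rw [Complex.sq_norm, Complex.normSq_apply]
    rw [heq]
    convert h1 using 1
    simp only [hhdef, Complex.mul_re, Complex.conj_re, Complex.conj_im]
    ring
  have henergy : ∀ j : ℕ, ∀ t ∈ Set.Icc (0:ℝ) T,
      ‖u t ((j:ℤ)+1) - v t ((j:ℤ)+1)‖^2 = ∫ s in (0:ℝ)..t, h j s := by
    intro j t ht
    have hint : (∫ s in (0:ℝ)..t, h j s) = ‖G j t‖^2 - ‖G j 0‖^2 :=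
      intervalIntegral.integral_eq_sub_of_hasDerivAt (fun s _ => hFderiv j s)
        ((hhcont j).intervalIntegrable _ _)
    have hG0 : G j 0 = 0 := by
      simp only [hGdef, intervalIntegral.integral_same, neg_zero]
    rw [hint, hG0, hGval j t ht]
    simp
  -- the squared-difference energy
  set Y : ℝ → ℝ := fun s => ∑' n : ℕ, ‖u s ((n:ℤ)+1) - v s ((n:ℤ)+1)‖^2 with hYdef
  have hwsum : ∀ s ∈ Set.Icc (0:ℝ) T,
      Summable fun n : ℕ => ‖u s ((n:ℤ)+1) - v s ((n:ℤ)+1)‖^2 := by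
    intro s hs
    refine Summable.of_nonneg_of_le (fun n => by positivity) (fun n => ?_)
      (((hMu s hs).1.add (hMv s hs).1).mul_left 2)
    have h1 := norm_sub_le (u s ((n:ℤ)+1)) (v s ((n:ℤ)+1))
    have h2 : ‖u s ((n:ℤ)+1) - v s ((n:ℤ)+1)‖^2
        ≤ (‖u s ((n:ℤ)+1)‖ + ‖v s ((n:ℤ)+1)‖)^2 :=
      pow_le_pow_left₀ (norm_nonneg _) h1 2
    nlinarith [h2, sq_nonneg (‖u s ((n:ℤ)+1)‖ - ‖v s ((n:ℤ)+1)‖)]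
  have hYnn : ∀ s, 0 ≤ Y s := fun s => tsum_nonneg (fun n => by positivity)
  have hYbdd : ∀ s ∈ Set.Icc (0:ℝ) T, Y s ≤ 2*(Mu+Mv) := by
    intro s hs
    have hb1 := hMu s hs
    have hb2 := hMv s hs
    calc Y s ≤ ∑' n : ℕ, 2*(‖u s ((n:ℤ)+1)‖^2 + ‖v s ((n:ℤ)+1)‖^2) := by
          refine Summable.tsum_le_tsum (fun n => ?_) (hwsum s hs) ((hb1.1.add hb2.1).mul_left 2)
          have h1 := norm_sub_le (u s ((n:ℤ)+1)) (v s ((n:ℤ)+1))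
          have h2 : ‖u s ((n:ℤ)+1) - v s ((n:ℤ)+1)‖^2
              ≤ (‖u s ((n:ℤ)+1)‖ + ‖v s ((n:ℤ)+1)‖)^2 :=
            pow_le_pow_left₀ (norm_nonneg _) h1 2
          nlinarith [h2, sq_nonneg (‖u s ((n:ℤ)+1)‖ - ‖v s ((n:ℤ)+1)‖)]
      _ = 2*((∑' n : ℕ, ‖u s ((n:ℤ)+1)‖^2) + ∑' n : ℕ, ‖v s ((n:ℤ)+1)‖^2) := by
          rw [tsum_mul_left, Summable.tsum_add hb1.1 hb2.1]
      _ ≤ 2*(Mu+Mv) := by linarith [hb1.2, hb2.2]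
  -- the L¹ Grönwall coefficient
  set ψ : ℝ → ℝ := fun s =>
      (4*lam*(|a|+|b|+|c|)) * (W1 k0 lam (u s) + W1 k0 lam (v s)) with hψdef
  have hψint : MeasureTheory.IntegrableOn ψ (Set.Icc (0:ℝ) T) := (huL1.add hvL1).const_mul _
  have hψnn : ∀ s ∈ Set.Icc (0:ℝ) T, 0 ≤ ψ s := by
    intro s hs
    have h1 := aux_W1_nonneg hk0 hlam0 (u s) (hubdd s hs) (fun n hn => hu0 s n hn)
    have h2 := aux_W1_nonneg hk0 hlam0 (v s) (hvbdd s hs) (fun n hn => hv0 s n hn)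
    have h3 : (0:ℝ) ≤ 4*lam*(|a|+|b|+|c|) := by positivity
    exact mul_nonneg h3 (by linarith)
  -- the key pointwise estimate
  have hkey : ∀ s ∈ Set.Icc (0:ℝ) T, ∀ j : ℕ,
      |h j s| ≤ (lam * (W1 k0 lam (u s) + W1 k0 lam (v s))) *
        (|a| * (‖u s ((j:ℤ)+3) - v s ((j:ℤ)+3)‖^2 + ‖u s ((j:ℤ)+2) - v s ((j:ℤ)+2)‖^2
                + 2*‖u s ((j:ℤ)+1) - v s ((j:ℤ)+1)‖^2)
         + |b| * (‖u s ((j:ℤ)+2) - v s ((j:ℤ)+2)‖^2 + ‖u s ((j:ℤ)) - v s ((j:ℤ))‖^2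
                + 2*‖u s ((j:ℤ)+1) - v s ((j:ℤ)+1)‖^2)
         + |c| * (‖u s ((j:ℤ)) - v s ((j:ℤ))‖^2 + ‖u s ((j:ℤ)-1) - v s ((j:ℤ)-1)‖^2
                + 2*‖u s ((j:ℤ)+1) - v s ((j:ℤ)+1)‖^2)) := by
    intro s hs j
    have hWu := aux_W1_bound hk0 hlam0 (u s) (hubdd s hs) (fun n hn => hu0 s n hn)
    have hWv := aux_W1_bound hk0 hlam0 (v s) (hvbdd s hs) (fun n hn => hv0 s n hn)
    have hWu0 : 0 ≤ W1 k0 lam (u s) :=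
      aux_W1_nonneg hk0 hlam0 (u s) (hubdd s hs) (fun n hn => hu0 s n hn)
    have hWv0 : 0 ≤ W1 k0 lam (v s) :=
      aux_W1_nonneg hk0 hlam0 (v s) (hvbdd s hs) (fun n hn => hv0 s n hn)
    set Wu := W1 k0 lam (u s)
    set Wv := W1 k0 lam (v s)
    set U3 := u s ((j:ℤ)+3) with hU3
    set U2 := u s ((j:ℤ)+2) with hU2
    set U1 := u s ((j:ℤ)+1) with hU1
    set U0 := u s ((j:ℤ)) with hU0
    set Um := u s ((j:ℤ)-1) with hUm
    set V3 := v s ((j:ℤ)+3) with hV3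
    set V2 := v s ((j:ℤ)+2) with hV2
    set V1 := v s ((j:ℤ)+1) with hV1
    set V0 := v s ((j:ℤ)) with hV0
    set Vm := v s ((j:ℤ)-1) with hVm
    set κ2 := kk k0 lam ((j:ℤ)+2) with hκ2
    set κ1 := kk k0 lam ((j:ℤ)+1) with hκ1
    set κ0 := kk k0 lam ((j:ℤ)) with hκ0
    have hκ2p : 0 < κ2 := aux_kk_pos hk0 hlam0 _
    have hκ1p : 0 < κ1 := aux_kk_pos hk0 hlam0 _
    have hκ0p : 0 < κ0 := aux_kk_pos hk0 hlam0 _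
    set A := U3 * (starRingEnd ℂ) U2 - V3 * (starRingEnd ℂ) V2 with hA
    set Bb := U2 * (starRingEnd ℂ) U0 - V2 * (starRingEnd ℂ) V0 with hBb
    set Cc := U0 * Um - V0 * Vm with hCc
    -- index arithmetic for kk
    have r1 : kk k0 lam ((j:ℤ)+3) = lam * κ2 := by
      rw [show ((j:ℤ)+3) = ((j:ℤ)+2)+1 by ring, aux_kk_succ lam hlam0]
    have r2 : κ2 = lam * κ1 := by
      rw [hκ2, show ((j:ℤ)+2) = ((j:ℤ)+1)+1 by ring, aux_kk_succ lam hlam0]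
    have r3 : κ1 = lam * κ0 := by
      rw [hκ1, show ((j:ℤ)+1) = ((j:ℤ))+1 by rfl, aux_kk_succ lam hlam0]
    have r4 : κ0 = lam * kk k0 lam ((j:ℤ)-1) := by
      have hh := aux_kk_succ (k0 := k0) lam hlam0 ((j:ℤ)-1)
      rw [show ((j:ℤ)-1+1) = (j:ℤ) by ring] at hh
      rw [hκ0, hh]
    -- split the difference of the nonlinearities
    have hsplit : sB a b c k0 lam (u s) ((j:ℤ)+1) - sB a b c k0 lam (v s) ((j:ℤ)+1)
        = -Complex.I * ((a:ℂ)*(κ2:ℝ)*A + (b:ℂ)*(κ1:ℝ)*Bb - (c:ℂ)*(κ0:ℝ)*Cc) := by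
      simp only [sB]
      rw [show ((j:ℤ)+1+2) = (j:ℤ)+3 by ring, show ((j:ℤ)+1+1) = (j:ℤ)+2 by ring,
        show ((j:ℤ)+1-1) = (j:ℤ) by ring, show ((j:ℤ)+1-2) = (j:ℤ)-1 by ring]
      rw [hA, hBb, hCc, ← hU3, ← hU2, ← hU0, ← hUm, ← hV3, ← hV2, ← hV0, ← hVm,
        ← hκ2, ← hκ1, ← hκ0]
      ring
    -- norm bound on the difference
    have hDn : ‖D j s‖ ≤ |a| *(κ2*‖A‖) + |b| *(κ1*‖Bb‖) + |c| *(κ0*‖Cc‖) := by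
      rw [hDval j s hs, hsplit]
      calc ‖-Complex.I * ((a:ℂ)*(κ2:ℝ)*A + (b:ℂ)*(κ1:ℝ)*Bb - (c:ℂ)*(κ0:ℝ)*Cc)‖
          = ‖(a:ℂ)*(κ2:ℝ)*A + (b:ℂ)*(κ1:ℝ)*Bb - (c:ℂ)*(κ0:ℝ)*Cc‖ := by
            rw [norm_mul]; simp
        _ ≤ ‖(a:ℂ)*(κ2:ℝ)*A + (b:ℂ)*(κ1:ℝ)*Bb‖ + ‖(c:ℂ)*(κ0:ℝ)*Cc‖ := norm_sub_le _ _
        _ ≤ ‖(a:ℂ)*(κ2:ℝ)*A‖ + ‖(b:ℂ)*(κ1:ℝ)*Bb‖ + ‖(c:ℂ)*(κ0:ℝ)*Cc‖ := by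
            have := norm_add_le ((a:ℂ)*(κ2:ℝ)*A) ((b:ℂ)*(κ1:ℝ)*Bb)
            linarith
        _ = |a| *(κ2*‖A‖) + |b| *(κ1*‖Bb‖) + |c| *(κ0*‖Cc‖) := by
            simp only [norm_mul, Complex.norm_real, Real.norm_eq_abs]
            rw [abs_of_pos hκ2p, abs_of_pos hκ1p, abs_of_pos hκ0p]
            ring
    -- product norm bounds
    have hA2 : ‖A‖ ≤ ‖U3 - V3‖ * ‖U2‖ + ‖V3‖ * ‖U2 - V2‖ := by
      have hAeq : A = (U3 - V3) * (starRingEnd ℂ) U2 + V3 * (starRingEnd ℂ) (U2 - V2) := by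
        rw [hA, map_sub]; ring
      rw [hAeq]
      refine (norm_add_le _ _).trans (le_of_eq ?_)
      rw [norm_mul, norm_mul, RCLike.norm_conj, RCLike.norm_conj]
    have hB2 : ‖Bb‖ ≤ ‖U2 - V2‖ * ‖U0‖ + ‖V2‖ * ‖U0 - V0‖ := by
      have hBeq : Bb = (U2 - V2) * (starRingEnd ℂ) U0 + V2 * (starRingEnd ℂ) (U0 - V0) := by
        rw [hBb, map_sub]; ring
      rw [hBeq]
      refine (norm_add_le _ _).trans (le_of_eq ?_)
      rw [norm_mul, norm_mul, RCLike.norm_conj, RCLike.norm_conj]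
    have hC2 : ‖Cc‖ ≤ ‖U0 - V0‖ * ‖Um‖ + ‖V0‖ * ‖Um - Vm‖ := by
      have hCeq : Cc = (U0 - V0) * Um + V0 * (Um - Vm) := by rw [hCc]; ring
      rw [hCeq]
      refine (norm_add_le _ _).trans (le_of_eq ?_)
      rw [norm_mul, norm_mul]
    -- W1 coefficient bounds
    have c1 : κ2 * ‖U2‖ ≤ Wu := by
      have t1 := hWu ((j:ℤ)+2)
      rw [← hκ2, ← hU2] at t1
      exact t1
    have c6 : κ0 * ‖V0‖ ≤ Wv := by
      have t1 := hWv ((j:ℤ))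
      rw [← hκ0, ← hV0] at t1
      exact t1
    have c2 : κ2 * ‖V3‖ ≤ Wv := by
      have t1 := hWv ((j:ℤ)+3)
      rw [r1, ← hV3] at t1
      nlinarith [mul_nonneg hκ2p.le (norm_nonneg V3)]
    have c3 : κ1 * ‖U0‖ ≤ lam * Wu := by
      have t1 := hWu ((j:ℤ))
      rw [← hκ0, ← hU0] at t1
      rw [r3]
      nlinarith [mul_le_mul_of_nonneg_left t1 hlam0.le]
    have c4 : κ1 * ‖V2‖ ≤ Wv := by
      have t1 := hWv ((j:ℤ)+2)
      rw [← hκ2, ← hV2, r2] at t1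
      nlinarith [mul_nonneg hκ1p.le (norm_nonneg V2)]
    have c5 : κ0 * ‖Um‖ ≤ lam * Wu := by
      have t1 := hWu ((j:ℤ)-1)
      rw [← hUm] at t1
      rw [r4]
      nlinarith [mul_le_mul_of_nonneg_left t1 hlam0.le]
    -- assemble
    have hGs : ‖G j s‖ = ‖U1 - V1‖ := by
      rw [hGval j s hs, hU1, hV1]
    have habsh : |h j s| ≤ 2 * (‖D j s‖ * ‖U1 - V1‖) := by
      have e1 : h j s = 2 * ((-(D j s)) * (starRingEnd ℂ) (G j s)).re := by rw [hhdef]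
      rw [e1, abs_mul]
      have e5 : |(2:ℝ)| = 2 := by norm_num
      rw [e5]
      have e3 := Complex.abs_re_le_norm ((-(D j s)) * (starRingEnd ℂ) (G j s))
      rw [norm_mul, norm_neg, RCLike.norm_conj, hGs] at e3
      have e4 := abs_nonneg (((-(D j s)) * (starRingEnd ℂ) (G j s)).re)
      nlinarith [e3]
    have hD2 : ‖D j s‖ ≤ |a| * (Wu * ‖U3 - V3‖ + Wv * ‖U2 - V2‖)
        + |b| * (lam * Wu * ‖U2 - V2‖ + Wv * ‖U0 - V0‖)
        + |c| * (lam * Wu * ‖U0 - V0‖ + Wv * ‖Um - Vm‖) := by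
      have sA : κ2 * ‖A‖ ≤ Wu * ‖U3 - V3‖ + Wv * ‖U2 - V2‖ := by
        nlinarith [mul_le_mul_of_nonneg_left hA2 hκ2p.le,
          mul_le_mul_of_nonneg_left c1 (norm_nonneg (U3 - V3)),
          mul_le_mul_of_nonneg_left c2 (norm_nonneg (U2 - V2))]
      have sEB : κ1 * ‖Bb‖ ≤ lam * Wu * ‖U2 - V2‖ + Wv * ‖U0 - V0‖ := by
        nlinarith [mul_le_mul_of_nonneg_left hB2 hκ1p.le,
          mul_le_mul_of_nonneg_left c3 (norm_nonneg (U2 - V2)),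
          mul_le_mul_of_nonneg_left c4 (norm_nonneg (U0 - V0))]
      have sC : κ0 * ‖Cc‖ ≤ lam * Wu * ‖U0 - V0‖ + Wv * ‖Um - Vm‖ := by
        nlinarith [mul_le_mul_of_nonneg_left hC2 hκ0p.le,
          mul_le_mul_of_nonneg_left c5 (norm_nonneg (U0 - V0)),
          mul_le_mul_of_nonneg_left c6 (norm_nonneg (Um - Vm))]
      have := mul_le_mul_of_nonneg_left sA (abs_nonneg a)
      have := mul_le_mul_of_nonneg_left sEB (abs_nonneg b)
      have := mul_le_mul_of_nonneg_left sC (abs_nonneg c)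
      linarith [hDn]
    -- group inequalities
    have ga : 2 * ‖U1 - V1‖ * (Wu * ‖U3 - V3‖ + Wv * ‖U2 - V2‖)
        ≤ lam * (Wu + Wv) * (‖U3 - V3‖^2 + ‖U2 - V2‖^2 + 2 * ‖U1 - V1‖^2) := by
      have p1 : Wu * (2 * ‖U1 - V1‖ * ‖U3 - V3‖) ≤ Wu * (‖U1 - V1‖^2 + ‖U3 - V3‖^2) :=
        mul_le_mul_of_nonneg_left (two_mul_le_add_sq _ _) hWu0
      have p2 : Wv * (2 * ‖U1 - V1‖ * ‖U2 - V2‖) ≤ Wv * (‖U1 - V1‖^2 + ‖U2 - V2‖^2) :=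
        mul_le_mul_of_nonneg_left (two_mul_le_add_sq _ _) hWv0
      have p3 : (0:ℝ) ≤ (lam - 1) * ((Wu + Wv) * (‖U3 - V3‖^2 + ‖U2 - V2‖^2 + 2 * ‖U1 - V1‖^2)) :=
        mul_nonneg (by linarith) (mul_nonneg (by linarith) (by positivity))
      have p4 : (0:ℝ) ≤ Wu * (‖U2 - V2‖^2 + ‖U1 - V1‖^2) := mul_nonneg hWu0 (by positivity)
      have p5 : (0:ℝ) ≤ Wv * (‖U3 - V3‖^2 + ‖U1 - V1‖^2) := mul_nonneg hWv0 (by positivity)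
      linarith
    have gb : 2 * ‖U1 - V1‖ * (lam * Wu * ‖U2 - V2‖ + Wv * ‖U0 - V0‖)
        ≤ lam * (Wu + Wv) * (‖U2 - V2‖^2 + ‖U0 - V0‖^2 + 2 * ‖U1 - V1‖^2) := by
      have p1 : (lam * Wu) * (2 * ‖U1 - V1‖ * ‖U2 - V2‖)
          ≤ (lam * Wu) * (‖U1 - V1‖^2 + ‖U2 - V2‖^2) :=
        mul_le_mul_of_nonneg_left (two_mul_le_add_sq _ _) (mul_nonneg hlam0.le hWu0)
      have p2 : Wv * (2 * ‖U1 - V1‖ * ‖U0 - V0‖) ≤ Wv * (‖U1 - V1‖^2 + ‖U0 - V0‖^2) :=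
        mul_le_mul_of_nonneg_left (two_mul_le_add_sq _ _) hWv0
      have p3 : (0:ℝ) ≤ (lam - 1) * (Wv * (‖U2 - V2‖^2 + ‖U0 - V0‖^2 + 2 * ‖U1 - V1‖^2)) :=
        mul_nonneg (by linarith) (mul_nonneg hWv0 (by positivity))
      have p4 : (0:ℝ) ≤ (lam * Wu) * (‖U0 - V0‖^2 + ‖U1 - V1‖^2) :=
        mul_nonneg (mul_nonneg hlam0.le hWu0) (by positivity)
      have p5 : (0:ℝ) ≤ Wv * (‖U2 - V2‖^2 + ‖U1 - V1‖^2) := mul_nonneg hWv0 (by positivity)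
      linarith
    have gc : 2 * ‖U1 - V1‖ * (lam * Wu * ‖U0 - V0‖ + Wv * ‖Um - Vm‖)
        ≤ lam * (Wu + Wv) * (‖U0 - V0‖^2 + ‖Um - Vm‖^2 + 2 * ‖U1 - V1‖^2) := by
      have p1 : (lam * Wu) * (2 * ‖U1 - V1‖ * ‖U0 - V0‖)
          ≤ (lam * Wu) * (‖U1 - V1‖^2 + ‖U0 - V0‖^2) :=
        mul_le_mul_of_nonneg_left (two_mul_le_add_sq _ _) (mul_nonneg hlam0.le hWu0)
      have p2 : Wv * (2 * ‖U1 - V1‖ * ‖Um - Vm‖) ≤ Wv * (‖U1 - V1‖^2 + ‖Um - Vm‖^2) :=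
        mul_le_mul_of_nonneg_left (two_mul_le_add_sq _ _) hWv0
      have p3 : (0:ℝ) ≤ (lam - 1) * (Wv * (‖U0 - V0‖^2 + ‖Um - Vm‖^2 + 2 * ‖U1 - V1‖^2)) :=
        mul_nonneg (by linarith) (mul_nonneg hWv0 (by positivity))
      have p4 : (0:ℝ) ≤ (lam * Wu) * (‖Um - Vm‖^2 + ‖U1 - V1‖^2) :=
        mul_nonneg (mul_nonneg hlam0.le hWu0) (by positivity)
      have p5 : (0:ℝ) ≤ Wv * (‖U0 - V0‖^2 + ‖U1 - V1‖^2) := mul_nonneg hWv0 (by positivity)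
      linarith
    have hh2 := mul_le_mul_of_nonneg_left hD2
      (by positivity : (0:ℝ) ≤ 2 * ‖U1 - V1‖)
    have gA := mul_le_mul_of_nonneg_left ga (abs_nonneg a)
    have gB := mul_le_mul_of_nonneg_left gb (abs_nonneg b)
    have gC := mul_le_mul_of_nonneg_left gc (abs_nonneg c)
    linarith [habsh, hh2, gA, gB, gC]
  -- partial sums of the densities are bounded by ψ * Y
  have hHbound : ∀ s ∈ Set.Icc (0:ℝ) T, ∀ N : ℕ,
      (∑ j ∈ Finset.range N, h j s) ≤ ψ s * Y s := by
    intro s hs N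
    have hg0 : ∀ i : ℤ, i ≤ 0 → ‖u s i - v s i‖^2 = 0 := by
      intro i hi
      rw [hu0 s i hi, hv0 s i hi]
      simp
    have hshift : ∀ cc : ℤ,
        (∑ j ∈ Finset.range N, ‖u s ((j:ℤ)+cc) - v s ((j:ℤ)+cc)‖^2) ≤ Y s :=
      fun cc => aux_shift_sum_le (fun i => ‖u s i - v s i‖^2) hg0 (fun i => by positivity)
        (hwsum s hs) cc N
    have hshift0 : (∑ j ∈ Finset.range N, ‖u s ((j:ℤ)) - v s ((j:ℤ))‖^2) ≤ Y s := by
      have h' := hshift 0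
      simpa using h'
    have hshiftm : (∑ j ∈ Finset.range N, ‖u s ((j:ℤ)-1) - v s ((j:ℤ)-1)‖^2) ≤ Y s := by
      have h' := hshift (-1)
      calc (∑ j ∈ Finset.range N, ‖u s ((j:ℤ)-1) - v s ((j:ℤ)-1)‖^2)
          = ∑ j ∈ Finset.range N, ‖u s ((j:ℤ)+(-1)) - v s ((j:ℤ)+(-1))‖^2 := by
            refine Finset.sum_congr rfl fun j _ => ?_
            rw [show ((j:ℤ)-1) = (j:ℤ)+(-1) by ring]
        _ ≤ Y s := h'
    have hWnn : (0:ℝ) ≤ lam * (W1 k0 lam (u s) + W1 k0 lam (v s)) := by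
      have h1 := aux_W1_nonneg hk0 hlam0 (u s) (hubdd s hs) (fun n hn => hu0 s n hn)
      have h2 := aux_W1_nonneg hk0 hlam0 (v s) (hvbdd s hs) (fun n hn => hv0 s n hn)
      have : (0:ℝ) ≤ W1 k0 lam (u s) + W1 k0 lam (v s) := by linarith
      exact mul_nonneg hlam0.le this
    have hQsum : (∑ j ∈ Finset.range N,
        (|a| * (‖u s ((j:ℤ)+3) - v s ((j:ℤ)+3)‖^2 + ‖u s ((j:ℤ)+2) - v s ((j:ℤ)+2)‖^2
                + 2*‖u s ((j:ℤ)+1) - v s ((j:ℤ)+1)‖^2)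
         + |b| * (‖u s ((j:ℤ)+2) - v s ((j:ℤ)+2)‖^2 + ‖u s ((j:ℤ)) - v s ((j:ℤ))‖^2
                + 2*‖u s ((j:ℤ)+1) - v s ((j:ℤ)+1)‖^2)
         + |c| * (‖u s ((j:ℤ)) - v s ((j:ℤ))‖^2 + ‖u s ((j:ℤ)-1) - v s ((j:ℤ)-1)‖^2
                + 2*‖u s ((j:ℤ)+1) - v s ((j:ℤ)+1)‖^2)))
        ≤ 4*(|a|+|b|+|c|) * Y s := by
      have hex : (∑ j ∈ Finset.range N,
        (|a| * (‖u s ((j:ℤ)+3) - v s ((j:ℤ)+3)‖^2 + ‖u s ((j:ℤ)+2) - v s ((j:ℤ)+2)‖^2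
                + 2*‖u s ((j:ℤ)+1) - v s ((j:ℤ)+1)‖^2)
         + |b| * (‖u s ((j:ℤ)+2) - v s ((j:ℤ)+2)‖^2 + ‖u s ((j:ℤ)) - v s ((j:ℤ))‖^2
                + 2*‖u s ((j:ℤ)+1) - v s ((j:ℤ)+1)‖^2)
         + |c| * (‖u s ((j:ℤ)) - v s ((j:ℤ))‖^2 + ‖u s ((j:ℤ)-1) - v s ((j:ℤ)-1)‖^2
                + 2*‖u s ((j:ℤ)+1) - v s ((j:ℤ)+1)‖^2)))
        = |a| * ((∑ j ∈ Finset.range N, ‖u s ((j:ℤ)+3) - v s ((j:ℤ)+3)‖^2)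
              + (∑ j ∈ Finset.range N, ‖u s ((j:ℤ)+2) - v s ((j:ℤ)+2)‖^2)
              + 2*(∑ j ∈ Finset.range N, ‖u s ((j:ℤ)+1) - v s ((j:ℤ)+1)‖^2))
         + |b| * ((∑ j ∈ Finset.range N, ‖u s ((j:ℤ)+2) - v s ((j:ℤ)+2)‖^2)
              + (∑ j ∈ Finset.range N, ‖u s ((j:ℤ)) - v s ((j:ℤ))‖^2)
              + 2*(∑ j ∈ Finset.range N, ‖u s ((j:ℤ)+1) - v s ((j:ℤ)+1)‖^2))
         + |c| * ((∑ j ∈ Finset.range N, ‖u s ((j:ℤ)) - v s ((j:ℤ))‖^2)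
              + (∑ j ∈ Finset.range N, ‖u s ((j:ℤ)-1) - v s ((j:ℤ)-1)‖^2)
              + 2*(∑ j ∈ Finset.range N, ‖u s ((j:ℤ)+1) - v s ((j:ℤ)+1)‖^2)) := by
        simp only [Finset.sum_add_distrib, ← Finset.mul_sum]
      rw [hex]
      have l1 := mul_le_mul_of_nonneg_left (hshift 3) (abs_nonneg a)
      have l2 := mul_le_mul_of_nonneg_left (hshift 2) (abs_nonneg a)
      have l3 := mul_le_mul_of_nonneg_left (hshift 1) (abs_nonneg a)
      have l4 := mul_le_mul_of_nonneg_left (hshift 2) (abs_nonneg b)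
      have l5 := mul_le_mul_of_nonneg_left hshift0 (abs_nonneg b)
      have l6 := mul_le_mul_of_nonneg_left (hshift 1) (abs_nonneg b)
      have l7 := mul_le_mul_of_nonneg_left hshift0 (abs_nonneg c)
      have l8 := mul_le_mul_of_nonneg_left hshiftm (abs_nonneg c)
      have l9 := mul_le_mul_of_nonneg_left (hshift 1) (abs_nonneg c)
      linarith
    calc (∑ j ∈ Finset.range N, h j s)
        ≤ ∑ j ∈ Finset.range N, |h j s| := Finset.sum_le_sum (fun j _ => le_abs_self _)
      _ ≤ ∑ j ∈ Finset.range N, (lam * (W1 k0 lam (u s) + W1 k0 lam (v s))) *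
        (|a| * (‖u s ((j:ℤ)+3) - v s ((j:ℤ)+3)‖^2 + ‖u s ((j:ℤ)+2) - v s ((j:ℤ)+2)‖^2
                + 2*‖u s ((j:ℤ)+1) - v s ((j:ℤ)+1)‖^2)
         + |b| * (‖u s ((j:ℤ)+2) - v s ((j:ℤ)+2)‖^2 + ‖u s ((j:ℤ)) - v s ((j:ℤ))‖^2
                + 2*‖u s ((j:ℤ)+1) - v s ((j:ℤ)+1)‖^2)
         + |c| * (‖u s ((j:ℤ)) - v s ((j:ℤ))‖^2 + ‖u s ((j:ℤ)-1) - v s ((j:ℤ)-1)‖^2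
                + 2*‖u s ((j:ℤ)+1) - v s ((j:ℤ)+1)‖^2)) :=
          Finset.sum_le_sum (fun j _ => hkey s hs j)
      _ = (lam * (W1 k0 lam (u s) + W1 k0 lam (v s))) * (∑ j ∈ Finset.range N,
        (|a| * (‖u s ((j:ℤ)+3) - v s ((j:ℤ)+3)‖^2 + ‖u s ((j:ℤ)+2) - v s ((j:ℤ)+2)‖^2
                + 2*‖u s ((j:ℤ)+1) - v s ((j:ℤ)+1)‖^2)
         + |b| * (‖u s ((j:ℤ)+2) - v s ((j:ℤ)+2)‖^2 + ‖u s ((j:ℤ)) - v s ((j:ℤ))‖^2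
                + 2*‖u s ((j:ℤ)+1) - v s ((j:ℤ)+1)‖^2)
         + |c| * (‖u s ((j:ℤ)) - v s ((j:ℤ))‖^2 + ‖u s ((j:ℤ)-1) - v s ((j:ℤ)-1)‖^2
                + 2*‖u s ((j:ℤ)+1) - v s ((j:ℤ)+1)‖^2))) := by
          rw [← Finset.mul_sum]
      _ ≤ (lam * (W1 k0 lam (u s) + W1 k0 lam (v s))) * (4*(|a|+|b|+|c|) * Y s) :=
          mul_le_mul_of_nonneg_left hQsum hWnn
      _ = ψ s * Y s := by
          rw [hψdef]
          ring
  -- partial sums of the energies as integrals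
  have hSint : ∀ t ∈ Set.Icc (0:ℝ) T, ∀ N : ℕ,
      (∑ j ∈ Finset.range N, ‖u t ((j:ℤ)+1) - v t ((j:ℤ)+1)‖^2)
        = ∫ s in (0:ℝ)..t, (∑ j ∈ Finset.range N, h j s) := by
    intro t ht N
    calc (∑ j ∈ Finset.range N, ‖u t ((j:ℤ)+1) - v t ((j:ℤ)+1)‖^2)
        = ∑ j ∈ Finset.range N, ∫ s in (0:ℝ)..t, h j s :=
          Finset.sum_congr rfl fun j _ => henergy j t ht
      _ = ∫ s in (0:ℝ)..t, (∑ j ∈ Finset.range N, h j s) :=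
          (intervalIntegral.integral_finset_sum
            (fun j _ => (hhcont j).intervalIntegrable 0 t)).symm
  -- interval integrability of ψ on subintervals
  have h0T : (0:ℝ) ∈ Set.Icc (0:ℝ) T := ⟨le_refl 0, hT0⟩
  have hψii : ∀ p q : ℝ, p ∈ Set.Icc (0:ℝ) T → q ∈ Set.Icc (0:ℝ) T →
      IntervalIntegrable ψ MeasureTheory.volume p q := by
    intro p q hp hq
    exact (hψint.mono_set (Set.uIcc_subset_Icc hp hq)).intervalIntegrable
  -- Y vanishes at 0
  have hY0 : Y 0 = 0 := by
    have hz : ∀ j : ℕ, ‖u 0 ((j:ℤ)+1) - v 0 ((j:ℤ)+1)‖^2 = 0 := by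
      intro j
      have hh := henergy j 0 h0T
      rwa [intervalIntegral.integral_same] at hh
    rw [hYdef]
    simp only [hz]
    exact tsum_zero
  -- the Grönwall argument
  set Z : Set ℝ := {t | t ∈ Set.Icc (0:ℝ) T ∧ ∀ s ∈ Set.Icc (0:ℝ) t, Y s = 0} with hZdef
  have h0Z : (0:ℝ) ∈ Z := by
    refine ⟨h0T, fun s hs => ?_⟩
    have hs0 : s = 0 := le_antisymm hs.2 hs.1
    rw [hs0]
    exact hY0
  have hZbdd : BddAbove Z := ⟨T, fun t ht => ht.1.2⟩
  have hZne : Z.Nonempty := ⟨0, h0Z⟩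
  set c₀ := sSup Z with hc₀def
  have hc₀mem : c₀ ∈ Set.Icc (0:ℝ) T :=
    ⟨le_csSup hZbdd h0Z, csSup_le hZne (fun t ht => ht.1.2)⟩
  set Φ : ℝ → ℝ := fun t => ∫ s in (0:ℝ)..t, ψ s with hΦdef
  have hΦcont : ContinuousOn Φ (Set.Icc (0:ℝ) T) := by
    have hint : MeasureTheory.IntegrableOn ψ (Set.uIcc (0:ℝ) T) MeasureTheory.volume := by
      rwa [Set.uIcc_of_le hT0]
    have hco := intervalIntegral.continuousOn_primitive_interval hint
    rwa [Set.uIcc_of_le hT0] at hco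
  have hcw : ContinuousWithinAt Φ (Set.Icc (0:ℝ) T) c₀ := hΦcont c₀ hc₀mem
  rw [Metric.continuousWithinAt_iff] at hcw
  obtain ⟨δ, hδpos, hδ⟩ := hcw (1/4) (by norm_num)
  obtain ⟨z, hzZ, hz⟩ := exists_lt_of_lt_csSup hZne
    (show c₀ - δ/2 < sSup Z by rw [← hc₀def]; linarith)
  have hzc₀ : z ≤ c₀ := le_csSup hZbdd hzZ
  set c' := min (c₀ + δ/2) T with hc'def
  have hc'mem : c' ∈ Set.Icc (0:ℝ) T :=
    ⟨le_min (by linarith [hc₀mem.1]) hT0, min_le_right _ _⟩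
  have hzc' : z ≤ c' := le_min (by linarith) hzZ.1.2
  have hsmall : ∀ t ∈ Set.Icc z c', (∫ s in z..t, ψ s) ≤ 1/2 := by
    intro t ht
    have htIcc : t ∈ Set.Icc (0:ℝ) T := ⟨le_trans hzZ.1.1 ht.1, le_trans ht.2 hc'mem.2⟩
    have hadd : Φ z + (∫ s in z..t, ψ s) = Φ t := by
      rw [hΦdef]
      exact intervalIntegral.integral_add_adjacent_intervals
        (hψii 0 z h0T hzZ.1) (hψii z t hzZ.1 htIcc)
    have hd1 : dist t c₀ < δ := by
      rw [Real.dist_eq, abs_lt]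
      constructor
      · have := ht.1
        linarith
      · have := le_trans ht.2 (min_le_left _ _)
        linarith
    have hd2 : dist z c₀ < δ := by
      rw [Real.dist_eq, abs_lt]
      constructor
      · linarith
      · linarith
    have h1 := hδ htIcc hd1
    have h2 := hδ hzZ.1 hd2
    rw [Real.dist_eq] at h1 h2
    have h1' := (abs_lt.mp h1).2
    have h2' := (abs_lt.mp h2).1
    linarith
  set S := sSup (Y '' Set.Icc z c') with hSdef
  have himgne : (Y '' Set.Icc z c').Nonempty := ⟨Y z, ⟨z, ⟨le_refl z, hzc'⟩, rfl⟩⟩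
  have himgbdd : BddAbove (Y '' Set.Icc z c') := by
    refine ⟨2*(Mu+Mv), ?_⟩
    rintro r ⟨t, ht, rfl⟩
    exact hYbdd t ⟨le_trans hzZ.1.1 ht.1, le_trans ht.2 hc'mem.2⟩
  have hS0 : 0 ≤ S :=
    le_trans (hYnn z) (le_csSup himgbdd ⟨z, ⟨le_refl z, hzc'⟩, rfl⟩)
  have hcontr : ∀ t ∈ Set.Icc z c', Y t ≤ S * (1/2) := by
    intro t ht
    have htIcc : t ∈ Set.Icc (0:ℝ) T := ⟨le_trans hzZ.1.1 ht.1, le_trans ht.2 hc'mem.2⟩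
    have hzt : z ≤ t := ht.1
    rw [hYdef]
    refine Real.tsum_le_of_sum_range_le (fun n => by positivity) (fun N => ?_)
    rw [hSint t htIcc N]
    have hHii : ∀ p q : ℝ, IntervalIntegrable
        (fun s => ∑ j ∈ Finset.range N, h j s) MeasureTheory.volume p q := by
      intro p q
      exact (continuous_finset_sum _ (fun j _ => hhcont j)).intervalIntegrable p q
    have hsplit : (∫ s in (0:ℝ)..t, ∑ j ∈ Finset.range N, h j s)
        = (∫ s in (0:ℝ)..z, ∑ j ∈ Finset.range N, h j s)
          + ∫ s in z..t, ∑ j ∈ Finset.range N, h j s :=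
      (intervalIntegral.integral_add_adjacent_intervals (hHii 0 z) (hHii z t)).symm
    rw [hsplit]
    have hpart1 : (∫ s in (0:ℝ)..z, ∑ j ∈ Finset.range N, h j s) ≤ 0 := by
      have hmono : (∫ s in (0:ℝ)..z, ∑ j ∈ Finset.range N, h j s)
          ≤ ∫ s in (0:ℝ)..z, (0:ℝ) := by
        refine intervalIntegral.integral_mono_on hzZ.1.1 (hHii 0 z)
          intervalIntegrable_const ?_
        intro s hs
        have hsT : s ∈ Set.Icc (0:ℝ) T := ⟨hs.1, le_trans hs.2 hzZ.1.2⟩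
        have hY0s : Y s = 0 := hzZ.2 s hs
        have hb := hHbound s hsT N
        rw [hY0s, mul_zero] at hb
        exact hb
      simpa using hmono
    have hpart2 : (∫ s in z..t, ∑ j ∈ Finset.range N, h j s) ≤ S * (1/2) := by
      have hmono : (∫ s in z..t, ∑ j ∈ Finset.range N, h j s)
          ≤ ∫ s in z..t, ψ s * S := by
        refine intervalIntegral.integral_mono_on hzt (hHii z t)
          ((hψii z t hzZ.1 htIcc).mul_const S) ?_
        intro s hs
        have hsT : s ∈ Set.Icc (0:ℝ) T := ⟨le_trans hzZ.1.1 hs.1, le_trans hs.2 htIcc.2⟩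
        have hYS : Y s ≤ S := le_csSup himgbdd ⟨s, ⟨hs.1, le_trans hs.2 ht.2⟩, rfl⟩
        calc (∑ j ∈ Finset.range N, h j s) ≤ ψ s * Y s := hHbound s hsT N
          _ ≤ ψ s * S := mul_le_mul_of_nonneg_left hYS (hψnn s hsT)
      have hconst : (∫ s in z..t, ψ s * S) = (∫ s in z..t, ψ s) * S := by
        rw [intervalIntegral.integral_mul_const]
      rw [hconst] at hmono
      refine hmono.trans ?_
      have h12 := hsmall t ht
      nlinarith [mul_le_mul_of_nonneg_right h12 hS0]
    linarith
  have hScontr : S ≤ S * (1/2) := by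
    refine csSup_le himgne ?_
    rintro r ⟨t, ht, rfl⟩
    exact hcontr t ht
  have hSzero : S = 0 := by linarith
  have hc'Z : c' ∈ Z := by
    refine ⟨hc'mem, fun s hs => ?_⟩
    rcases le_or_gt s z with hsz | hsz
    · exact hzZ.2 s ⟨hs.1, hsz⟩
    · have hsimg : Y s ≤ S := le_csSup himgbdd ⟨s, ⟨hsz.le, hs.2⟩, rfl⟩
      have := hYnn s
      rw [hSzero] at hsimg
      linarith
  have hc'le : c' ≤ c₀ := by
    rw [hc₀def]
    exact le_csSup hZbdd hc'Z
  have hc₀T : c₀ = T := by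
    by_contra hne
    have hlt : c₀ < T := lt_of_le_of_ne hc₀mem.2 hne
    have hgt : c₀ < c' := lt_min (by linarith) hlt
    linarith
  have hTZ : ∀ s ∈ Set.Icc (0:ℝ) T, Y s = 0 := by
    have hc'T : c' = T := by
      rw [hc'def, hc₀T]
      exact min_eq_right (by linarith)
    intro s hs
    rw [hc'T] at hc'Z
    exact hc'Z.2 s hs
  -- conclusion
  intro t ht
  funext n
  rcases le_or_gt n 0 with hn | hn
  · rw [hu0 t n hn, hv0 t n hn]
  · have hterm : ‖u t n - v t n‖^2 ≤ Y t := by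
      have hle := Summable.le_tsum (hwsum t ht) (n-1).toNat (fun m _ => by positivity)
      rw [show (((n-1).toNat : ℤ)+1) = n by omega] at hle
      rw [hYdef]
      exact hle
    have hYt : Y t = 0 := hTZ t ht
    have h1 : ‖u t n - v t n‖ = 0 := by
      nlinarith [norm_nonneg (u t n - v t n), hterm, hYt]
    exact sub_eq_zero.mp (norm_eq_zero.mp h1)
end
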